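/- arXiv:0710.3952 — 9 statements merged into one kernel-verified Lean document; each statement's English description precedes it below -/
import Mathlib

section
/- Let α ∈ (0,1], c > 0, let n₀ ≥ 1 be an integer, and let (rₙ)_{n≥1} be a summable sequence of non-negative real numbers such that rₙ ≥ c n^{−2α−1} for all n ≥ n₀. Then for all real r with 0 < r ≤ min(0.035, 1/n₀): 2 ∑_{n=1}^∞ rₙ (1 − cos(n r)) ≥ c (1 − cos 1) (π/2)^{−2α} r^{2α}. -/
/-!
Put `u = x / π`. The indices `n` with `n₀ ≤ n ≤ 1 / u` satisfy `n x ≤ π` and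
`n ^ (-2α-1) ≥ u ^ (2α+1)`, and there are about `1 / u` of them, so it suffices to bound
`r n (1 - cos (n x))` below by a multiple of `c u ^ (2α+1)` on a block of such indices.
For `α ≤ 1/2` use the block where `n x ∈ [π/2, π]`, on which `1 - cos (n x) ≥ 1`.
For `α ≥ 1/2` use all of `[n₀, π/x]` together with Jordan's bound `1 - cos t ≥ 2 (t/π)²`:
then `n ^ (-2α-1) · 2 (n u)² = 2 u² n ^ (1-2α) ≥ 2 u ^ (2α+1)`.
In both cases the resulting constant beats `(1 - cos 1) 2 ^ (2α)` thanks to `cos 1 ≥ 17/32`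
and `x ≤ 0.035`.
-/

open Real

lemma seventeen_div_thirtytwo_le_cos_one : (17 / 32 : ℝ) ≤ cos 1 := by
  have hhalf : (7 / 8 : ℝ) ≤ cos (1 / 2) := by
    have := one_sub_sq_div_two_le_cos (x := (1 / 2 : ℝ))
    norm_num at this ⊢
    linarith
  have hdouble := cos_two_mul (1 / 2 : ℝ)
  norm_num at hdouble
  nlinarith

lemma rpow_le_rpow_neg_of_mul_le_one {n u p : ℝ} (hn : 0 < n) (hu : 0 ≤ u) (hp : 0 ≤ p)
    (h : n * u ≤ 1) : u ^ p ≤ n ^ (-p) := by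
  rw [rpow_neg hn.le, ← one_div, le_div_iff₀ (rpow_pos_of_pos hn p), ← mul_rpow hu hn.le,
    mul_comm]
  exact rpow_le_one (by positivity) h hp

lemma mul_le_tsum_of_le_of_mem_Icc {f : ℕ → ℝ} (hf : ∀ n, 0 ≤ f n) (hs : Summable f)
    {M N : ℕ} {b : ℝ} (hb : 0 ≤ b) (h : ∀ n ∈ Finset.Icc M N, b ≤ f n) :
    ((N : ℝ) + 1 - M) * b ≤ ∑' n, f n := by
  rcases le_or_gt M (N + 1) with hMN | hMN
  · calc ((N : ℝ) + 1 - M) * b = (Finset.Icc M N).card • b := by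
          rw [Nat.card_Icc, nsmul_eq_mul, Nat.cast_sub hMN]; push_cast; ring
      _ ≤ ∑ n ∈ Finset.Icc M N, f n := Finset.card_nsmul_le_sum _ _ _ h
      _ ≤ ∑' n, f n := hs.sum_le_tsum _ fun n _ => hf n
  · have hneg : (N : ℝ) + 1 - M ≤ 0 := by
      have : (N : ℝ) + 1 < M := by exact_mod_cast hMN
      linarith
    exact (mul_nonpos_of_nonpos_of_nonneg hneg hb).trans (tsum_nonneg hf)

lemma mul_le_tsum_mul_one_sub_cos {r : ℕ → ℝ} (hr : ∀ n, 1 ≤ n → 0 ≤ r n)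
    (hsum : Summable r) (x : ℝ) {M N : ℕ} {b : ℝ} (hb : 0 ≤ b)
    (h : ∀ n ∈ Finset.Icc M N, b ≤ r n * (1 - cos (n * x))) :
    ((N : ℝ) + 1 - M) * b ≤ ∑' n : ℕ, r n * (1 - cos (n * x)) := by
  refine mul_le_tsum_of_le_of_mem_Icc (fun n => ?_) ?_ hb h
  · rcases Nat.eq_zero_or_pos n with rfl | hn
    · simp
    · exact mul_nonneg (hr n hn) (sub_nonneg.2 (cos_le_one _))
  · refine hsum.abs.mul_left 2 |>.of_norm_bounded fun n => ?_
    rw [Real.norm_eq_abs, abs_mul, mul_comm]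
    gcongr
    rw [abs_le]
    constructor <;> linarith [neg_one_le_cos (n * x), cos_le_one (n * x)]

section TermBounds

variable {α c ρ n x : ℝ}

lemma le_mul_one_sub_cos_of_cos_nonpos (hc : 0 ≤ c) (hα : 0 ≤ 2 * α + 1) (hn : 0 < n)
    (hx : 0 < x) (hnx : n * x ≤ π) (hcos : cos (n * x) ≤ 0) (hρ : c * n ^ (-2 * α - 1) ≤ ρ) :
    c * (x / π) ^ (2 * α + 1) ≤ ρ * (1 - cos (n * x)) := by
  have hpow : (x / π) ^ (2 * α + 1) ≤ n ^ (-2 * α - 1) := by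
    rw [show -2 * α - 1 = -(2 * α + 1) by ring]
    refine rpow_le_rpow_neg_of_mul_le_one hn (by positivity) hα ?_
    rwa [← mul_div_assoc, div_le_one pi_pos]
  have hρ0 : 0 ≤ ρ := (mul_nonneg hc (rpow_nonneg hn.le _)).trans hρ
  calc c * (x / π) ^ (2 * α + 1) ≤ c * n ^ (-2 * α - 1) := by gcongr
    _ ≤ ρ := hρ
    _ ≤ ρ * (1 - cos (n * x)) := le_mul_of_one_le_right hρ0 (by linarith)

lemma two_mul_le_mul_one_sub_cos (hc : 0 ≤ c) (hα : 1 / 2 ≤ α) (hn : 0 < n) (hx : 0 < x)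
    (hnx : n * x ≤ π) (hρ : c * n ^ (-2 * α - 1) ≤ ρ) :
    2 * c * (x / π) ^ (2 * α + 1) ≤ ρ * (1 - cos (n * x)) := by
  set u := x / π with hu
  have hu0 : 0 < u := by positivity
  have hnu : n * u ≤ 1 := by rwa [hu, ← mul_div_assoc, div_le_one pi_pos]
  have hpow : u ^ (2 * α - 1) ≤ n ^ (-(2 * α - 1)) :=
    rpow_le_rpow_neg_of_mul_le_one hn hu0.le (by linarith) hnu
  have hjordan : 2 * (n * u) ^ 2 ≤ 1 - cos (n * x) := by
    have := cos_le_one_sub_mul_cos_sq (x := n * x) (by rw [abs_of_pos (by positivity)]; exact hnx)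
    rw [hu]
    field_simp at this ⊢
    linarith
  have hρ0 : 0 ≤ ρ := (mul_nonneg hc (rpow_nonneg hn.le _)).trans hρ
  calc 2 * c * u ^ (2 * α + 1) = 2 * c * u ^ 2 * u ^ (2 * α - 1) := by
        rw [show 2 * α + 1 = 2 * α - 1 + (2 : ℕ) by push_cast; ring,
          rpow_add_natCast hu0.ne']
        ring
    _ ≤ 2 * c * u ^ 2 * n ^ (-(2 * α - 1)) := by gcongr
    _ = c * n ^ (-2 * α - 1) * (2 * (n * u) ^ 2) := by
        rw [show -(2 * α - 1) = -2 * α - 1 + (2 : ℕ) by push_cast; ring,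
          rpow_add_natCast hn.ne']
        ring
    _ ≤ ρ * (1 - cos (n * x)) := mul_le_mul hρ hjordan (by positivity) hρ0

end TermBounds

section BlockBounds

variable {α c x : ℝ} {n₀ : ℕ} {r : ℕ → ℝ}

lemma one_sub_two_mul_div_pi_mul_le_two_tsum (hc : 0 ≤ c) (hα : 0 ≤ 2 * α + 1)
    (hr : ∀ n, 1 ≤ n → 0 ≤ r n) (hsum : Summable r)
    (hlb : ∀ n, n₀ ≤ n → c * (n : ℝ) ^ (-2 * α - 1) ≤ r n) (hx : 0 < x) (hn₀x : n₀ * x ≤ 1) :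
    (1 - 2 * x / π) * (c * (x / π) ^ (2 * α)) ≤ 2 * ∑' n : ℕ, r n * (1 - cos (n * x)) := by
  have hN : π / x - 1 ≤ ⌊π / x⌋₊ := sub_le_iff_le_add.2 (Nat.lt_floor_add_one _).le
  have hM : (⌈π / (2 * x)⌉₊ : ℝ) < π / (2 * x) + 1 := Nat.ceil_lt_add_one (by positivity)
  have hterm : ∀ n ∈ Finset.Icc ⌈π / (2 * x)⌉₊ ⌊π / x⌋₊,
      c * (x / π) ^ (2 * α + 1) ≤ r n * (1 - cos (n * x)) := by
    intro n hn
    rw [Finset.mem_Icc, Nat.ceil_le, Nat.le_floor_iff (by positivity),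
      div_le_iff₀ (by positivity), le_div_iff₀ hx] at hn
    have hn₀n : n₀ ≤ n := by
      have : (n₀ : ℝ) * x ≤ n * x := by linarith [pi_gt_three]
      exact_mod_cast le_of_mul_le_mul_right this hx
    refine le_mul_one_sub_cos_of_cos_nonpos hc hα ?_ hx hn.2 ?_ (hlb n hn₀n)
    · exact pos_of_mul_pos_left (by linarith [pi_pos]) (by positivity : 0 ≤ 2 * x)
    · exact cos_nonpos_of_pi_div_two_le_of_le (by linarith) (by linarith [pi_pos])
  have hb : 0 ≤ c * (x / π) ^ (2 * α + 1) := by positivity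
  calc (1 - 2 * x / π) * (c * (x / π) ^ (2 * α))
      = 2 * ((π / (2 * x) - 1) * (c * (x / π) ^ (2 * α + 1))) := by
        rw [rpow_add_one (by positivity)]
        field_simp
    _ ≤ 2 * ((⌊π / x⌋₊ + 1 - ⌈π / (2 * x)⌉₊) * (c * (x / π) ^ (2 * α + 1))) := by
        gcongr 2 * (?_ * _)
        have : π / x = 2 * (π / (2 * x)) := by field_simp
        linarith
    _ ≤ 2 * ∑' n : ℕ, r n * (1 - cos (n * x)) := by
        gcongr
        exact mul_le_tsum_mul_one_sub_cos hr hsum x hb hterm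

lemma four_mul_one_sub_inv_pi_mul_le_two_tsum (hc : 0 ≤ c) (hα : 1 / 2 ≤ α) (hn₀ : 1 ≤ n₀)
    (hr : ∀ n, 1 ≤ n → 0 ≤ r n) (hsum : Summable r)
    (hlb : ∀ n, n₀ ≤ n → c * (n : ℝ) ^ (-2 * α - 1) ≤ r n) (hx : 0 < x) (hn₀x : n₀ * x ≤ 1) :
    4 * (1 - 1 / π) * (c * (x / π) ^ (2 * α)) ≤ 2 * ∑' n : ℕ, r n * (1 - cos (n * x)) := by
  have hN : π / x - 1 ≤ ⌊π / x⌋₊ := sub_le_iff_le_add.2 (Nat.lt_floor_add_one _).le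
  have hn₀' : (n₀ : ℝ) ≤ 1 / x := by rwa [le_div_iff₀ hx]
  have hterm : ∀ n ∈ Finset.Icc n₀ ⌊π / x⌋₊,
      2 * c * (x / π) ^ (2 * α + 1) ≤ r n * (1 - cos (n * x)) := by
    intro n hn
    rw [Finset.mem_Icc, Nat.le_floor_iff (by positivity), le_div_iff₀ hx] at hn
    exact two_mul_le_mul_one_sub_cos hc hα (Nat.cast_pos.2 (hn₀.trans hn.1)) hx hn.2
      (hlb n hn.1)
  have hb : 0 ≤ 2 * c * (x / π) ^ (2 * α + 1) := by positivity
  calc 4 * (1 - 1 / π) * (c * (x / π) ^ (2 * α))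
      = 2 * ((π / x - 1 / x) * (2 * c * (x / π) ^ (2 * α + 1))) := by
        rw [rpow_add_one (by positivity)]
        field_simp
        ring
    _ ≤ 2 * ((⌊π / x⌋₊ + 1 - n₀) * (2 * c * (x / π) ^ (2 * α + 1))) := by
        gcongr 2 * (?_ * _)
        linarith
    _ ≤ 2 * ∑' n : ℕ, r n * (1 - cos (n * x)) := by
        gcongr
        exact mul_le_tsum_mul_one_sub_cos hr hsum x hb hterm

end BlockBounds

lemma pi_div_two_rpow_neg_mul_rpow {x : ℝ} (hx : 0 ≤ x) (p : ℝ) :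
    (π / 2) ^ (-p) * x ^ p = 2 ^ p * (x / π) ^ p := by
  rw [rpow_neg (by positivity), ← inv_rpow (by positivity), ← mul_rpow (by positivity) hx,
    ← mul_rpow zero_le_two (by positivity)]
  congr 1
  field_simp

/-- lower bound part of Lemma `fBreg`. -/
theorem stmt_2 (α c : ℝ) (hα0 : 0 < α) (hα1 : α ≤ 1) (hc : 0 < c)
    (n₀ : ℕ) (hn₀ : 1 ≤ n₀) (r : ℕ → ℝ) (hr : ∀ n, 1 ≤ n → 0 ≤ r n)
    (hsum : Summable r)
    (hlb : ∀ n, n₀ ≤ n → c * (n : ℝ) ^ (-2 * α - 1) ≤ r n) :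
    ∀ x : ℝ, 0 < x → x ≤ min 0.035 (1 / (n₀ : ℝ)) →
      c * (1 - Real.cos 1) * (π / 2) ^ (-2 * α) * x ^ (2 * α) ≤
        2 * (∑' n : ℕ, r n * (1 - Real.cos ((n : ℝ) * x))) := by
  intro x hx hxle
  have hx₁ : x ≤ 0.035 := hxle.trans (min_le_left _ _)
  have hn₀x : (n₀ : ℝ) * x ≤ 1 := by
    have := hxle.trans (min_le_right _ _)
    rwa [le_div_iff₀ (by exact_mod_cast hn₀), mul_comm] at this
  have hcos := seventeen_div_thirtytwo_le_cos_one
  rw [mul_assoc _ ((π / 2) ^ _), neg_mul, pi_div_two_rpow_neg_mul_rpow hx.le,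
    show c * (1 - cos 1) * (2 ^ (2 * α) * (x / π) ^ (2 * α))
      = (1 - cos 1) * 2 ^ (2 * α) * (c * (x / π) ^ (2 * α)) by ring]
  rcases le_or_gt α (1 / 2) with hα | hα
  · refine le_trans ?_ (one_sub_two_mul_div_pi_mul_le_two_tsum hc.le (by linarith) hr hsum hlb
      hx hn₀x)
    have hpow : (2 : ℝ) ^ (2 * α) ≤ 2 :=
      (rpow_le_rpow_of_exponent_le one_le_two (by linarith)).trans_eq (rpow_one 2)
    have hxπ : 2 * x / π ≤ 1 / 16 := by rw [div_le_iff₀ pi_pos]; linarith [pi_gt_three]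
    gcongr ?_ * _
    nlinarith [cos_le_one 1]
  · refine le_trans ?_ (four_mul_one_sub_inv_pi_mul_le_two_tsum hc.le hα.le hn₀ hr hsum hlb
      hx hn₀x)
    have hpow : (2 : ℝ) ^ (2 * α) ≤ 4 :=
      (rpow_le_rpow_of_exponent_le one_le_two (show 2 * α ≤ 2 by linarith)).trans_eq
        (by norm_num [rpow_two])
    have hπ : 1 / π ≤ 1 / 3 := by gcongr; exact pi_gt_three.le
    gcongr ?_ * _
    nlinarith [cos_le_one 1]
end

section
/- Let γ ∈ (0,1) and for each integer n ≥ 1 set q_n := 2 ∫₀^π cos(n x) · x^{−γ} dx. Then there exist constants 0 < c ≤ C < ∞ (depending only on γ) such that for all n ≥ 1: c · n^{γ−1} ≤ q_n ≤ C · n^{γ−1}; in particular q_n > 0 for every n ≥ 1. -/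
/-!
Substituting `u = n x` gives `q_n = 2 n ^ (γ - 1) ∫₀^{nπ} cos u · u ^ (-γ) du`, and cutting `[0, nπ]`
into half-periods turns the integral into the alternating sum `∑_{k<n} (-1) ^ k a_k` with
`a_k = ∫₀^π cos v · (v + kπ) ^ (-γ) dv`. As `cos` is odd about `π/2`, `∫₀^π cos · f > 0` for every
strictly decreasing `f`. Applied to `(v + kπ) ^ (-γ)` and to `(v + kπ) ^ (-γ) - (v + (k+1)π) ^ (-γ)`
(decreasing because `x ^ (-γ)` is convex), this shows that `a_k` is positive and strictly decreasing,
so every partial sum lies between `a_0 - a_1 > 0` and `a_0`.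
-/

open Real intervalIntegral Set
open MeasureTheory (volume)

section AlternatingSum

variable {b : ℕ → ℝ}

lemma alternating_sum_range_succ (n : ℕ) :
    ∑ k ∈ Finset.range (n + 1), (-1) ^ k * b k
      = b 0 - ∑ k ∈ Finset.range n, (-1) ^ k * b (k + 1) := by
  simp only [Finset.sum_range_succ', pow_succ, pow_zero, one_mul, mul_neg_one, neg_mul,
    Finset.sum_neg_distrib]
  ring

lemma alternating_sum_mem_Icc (hb : Antitone b) (hb0 : ∀ k, 0 ≤ b k) (n : ℕ) :
    ∑ k ∈ Finset.range n, (-1) ^ k * b k ∈ Icc 0 (b 0) := by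
  induction n generalizing b with
  | zero => simpa using hb0 0
  | succ n ih =>
    obtain ⟨h0, h1⟩ := ih (b := fun k ↦ b (k + 1)) (fun _ _ h ↦ hb (by omega)) fun k ↦ hb0 (k + 1)
    rw [alternating_sum_range_succ]
    constructor <;> linarith [hb (Nat.zero_le 1)]

lemma alternating_sum_mem_Icc_of_ne_zero (hb : Antitone b) (hb0 : ∀ k, 0 ≤ b k) {n : ℕ}
    (hn : n ≠ 0) : ∑ k ∈ Finset.range n, (-1) ^ k * b k ∈ Icc (b 0 - b 1) (b 0) := by
  obtain ⟨n, rfl⟩ := Nat.exists_eq_succ_of_ne_zero hn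
  obtain ⟨h0, h1⟩ := alternating_sum_mem_Icc (b := fun k ↦ b (k + 1))
    (fun _ _ h ↦ hb (by omega)) (fun k ↦ hb0 (k + 1)) n
  rw [alternating_sum_range_succ]
  constructor <;> linarith

end AlternatingSum

theorem integral_cos_mul_pos_of_strictAntiOn {f : ℝ → ℝ} (hf : IntervalIntegrable f volume 0 π)
    (hanti : StrictAntiOn f (Ioo 0 π)) : 0 < ∫ v in 0..π, cos v * f v := by
  have hπ := pi_pos
  have hmid : π / 2 ∈ Ioo 0 π := ⟨by linarith, by linarith⟩
  set g := fun v ↦ cos v * (f v - f (π / 2)) with hg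
  have hcf : IntervalIntegrable (fun v ↦ cos v * f v) volume 0 π :=
    hf.continuousOn_mul continuous_cos.continuousOn
  have hgi : IntervalIntegrable g volume 0 π :=
    (hf.sub intervalIntegrable_const).continuousOn_mul continuous_cos.continuousOn
  have hmid' : π / 2 ∈ uIcc 0 π := Ioo_subset_Icc_self.trans Icc_subset_uIcc hmid
  -- `∫₀^π cos = 0`, so the integrand may be recentred at the value `f (π / 2)`.
  have hshift : ∫ v in 0..π, cos v * f v = ∫ v in 0..π, g v := by
    rw [hg, integral_congr fun v _ ↦ mul_sub (cos v) (f v) (f (π / 2)),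
      integral_sub hcf (intervalIntegrable_const.continuousOn_mul continuous_cos.continuousOn),
      integral_mul_const, integral_cos]
    simp
  have hleft : 0 < ∫ v in 0..π / 2, g v :=
    intervalIntegral_pos_of_pos_on (hgi.mono_set (uIcc_subset_uIcc left_mem_uIcc hmid'))
      (fun v hv ↦ mul_pos (cos_pos_of_mem_Ioo ⟨by linarith [hv.1], hv.2⟩)
        (sub_pos.2 (hanti ⟨hv.1, by linarith [hv.2]⟩ hmid hv.2))) (by linarith)
  have hright : 0 < ∫ v in π / 2..π, g v :=
    intervalIntegral_pos_of_pos_on (hgi.mono_set (uIcc_subset_uIcc hmid' right_mem_uIcc))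
      (fun v hv ↦ mul_pos_of_neg_of_neg (cos_neg_of_pi_div_two_lt_of_lt hv.1 (by linarith [hv.2]))
        (sub_neg.2 (hanti hmid ⟨by linarith [hv.1], hv.2⟩ hv.1))) (by linarith)
  rw [hshift, ← integral_add_adjacent_intervals
    (hgi.mono_set (uIcc_subset_uIcc left_mem_uIcc hmid'))
    (hgi.mono_set (uIcc_subset_uIcc hmid' right_mem_uIcc))]
  exact add_pos hleft hright

lemma strictAntiOn_rpow_neg_sub_rpow_neg_add {γ h : ℝ} (hγ : 0 < γ) (hh : 0 < h) :
    StrictAntiOn (fun x : ℝ ↦ x ^ (-γ) - (x + h) ^ (-γ)) (Ioi 0) := by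
  refine strictAntiOn_of_hasDerivWithinAt_neg (convex_Ioi 0)
    (f' := fun x ↦ -γ * x ^ (-γ - 1) - 1 * -γ * (x + h) ^ (-γ - 1)) ?_ ?_ ?_
  · refine ContinuousOn.sub (continuousOn_id.rpow_const fun x hx ↦ Or.inl (ne_of_gt hx))
      ((continuous_id.add continuous_const).continuousOn.rpow_const fun x hx ↦ Or.inl ?_)
    exact (add_pos (mem_Ioi.1 hx) hh).ne'
  · intro x hx
    rw [interior_Ioi] at hx
    have hx0 : 0 < x := hx
    exact ((hasDerivAt_rpow_const (Or.inl hx0.ne')).sub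
      ((hasDerivAt_id x).add_const h |>.rpow_const (Or.inl (add_pos hx0 hh).ne'))).hasDerivWithinAt
  · intro x hx
    rw [interior_Ioi] at hx
    have hx0 : 0 < x := hx
    have : (x + h) ^ (-γ - 1) < x ^ (-γ - 1) := rpow_lt_rpow_of_neg hx0 (by linarith) (by linarith)
    nlinarith

lemma intervalIntegrable_add_rpow_neg {γ : ℝ} (hγ : γ < 1) (c a b : ℝ) :
    IntervalIntegrable (fun x ↦ (x + c) ^ (-γ)) volume a b := by
  simpa using (intervalIntegrable_rpow' (a := a + c) (b := b + c) (by linarith)).comp_add_right c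

/-- Up to the sign `(-1) ^ k`, the integral of `cos u · u ^ (-γ)` over `[kπ, (k + 1)π]`. -/
noncomputable def halfPeriodIntegral (γ : ℝ) (k : ℕ) : ℝ :=
  ∫ v in 0..π, cos v * (v + k * π) ^ (-γ)

section HalfPeriodIntegral

variable {γ : ℝ}

lemma halfPeriodIntegral_pos (hγ0 : 0 < γ) (hγ1 : γ < 1) (k : ℕ) : 0 < halfPeriodIntegral γ k := by
  refine integral_cos_mul_pos_of_strictAntiOn (intervalIntegrable_add_rpow_neg hγ1 _ _ _) ?_
  intro x hx y _ hxy
  exact rpow_lt_rpow_of_neg (by have := hx.1; positivity) (by linarith) (by linarith)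

lemma strictAnti_halfPeriodIntegral (hγ0 : 0 < γ) (hγ1 : γ < 1) :
    StrictAnti (halfPeriodIntegral γ) := by
  refine strictAnti_nat_of_succ_lt fun k ↦ sub_pos.1 ?_
  have hint (c : ℝ) : IntervalIntegrable (fun v ↦ cos v * (v + c) ^ (-γ)) volume 0 π :=
    (intervalIntegrable_add_rpow_neg hγ1 c 0 π).continuousOn_mul continuous_cos.continuousOn
  have hdiff : halfPeriodIntegral γ k - halfPeriodIntegral γ (k + 1)
      = ∫ v in 0..π, cos v * ((v + k * π) ^ (-γ) - (v + k * π + π) ^ (-γ)) := by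
    rw [halfPeriodIntegral, halfPeriodIntegral, ← integral_sub (hint _) (hint _)]
    refine integral_congr fun v _ ↦ ?_
    push_cast
    ring_nf
  rw [hdiff]
  refine integral_cos_mul_pos_of_strictAntiOn
    ((intervalIntegrable_add_rpow_neg hγ1 _ _ _).sub (by
      simpa only [add_assoc] using intervalIntegrable_add_rpow_neg hγ1 (k * π + π) 0 π)) ?_
  intro x hx y hy hxy
  have hk : (0 : ℝ) ≤ k * π := by positivity
  exact strictAntiOn_rpow_neg_sub_rpow_neg_add hγ0 pi_pos
    (show 0 < x + k * π by linarith [hx.1]) (show 0 < y + k * π by linarith [hy.1]) (by linarith)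

lemma integral_cos_mul_rpow_neg_eq_sum (hγ : γ < 1) (n : ℕ) :
    ∫ u in 0..n * π, cos u * u ^ (-γ)
      = ∑ k ∈ Finset.range n, (-1) ^ k * halfPeriodIntegral γ k := by
  have hsum := sum_integral_adjacent_intervals (a := fun k : ℕ ↦ (k : ℝ) * π) (n := n)
    (f := fun u ↦ cos u * u ^ (-γ)) (μ := volume) fun k _ ↦
      (intervalIntegrable_rpow' (by linarith)).continuousOn_mul continuous_cos.continuousOn
  simp only [Nat.cast_zero, zero_mul] at hsum
  rw [← hsum]
  refine Finset.sum_congr rfl fun k _ ↦ ?_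
  have hshift := integral_comp_add_right (a := 0) (b := π) (fun u ↦ cos u * u ^ (-γ)) (k * π)
  rw [zero_add, show π + k * π = ((k + 1 : ℕ) : ℝ) * π by push_cast; ring] at hshift
  rw [← hshift, halfPeriodIntegral, ← intervalIntegral.integral_const_mul]
  refine integral_congr fun v _ ↦ ?_
  simp only [cos_add_nat_mul_pi]
  ring

end HalfPeriodIntegral

lemma integral_comp_mul_left_mul_rpow_neg (g : ℝ → ℝ) (γ : ℝ) {t b : ℝ} (ht : 0 < t) (hb : 0 ≤ b) :
    ∫ x in 0..b, g (t * x) * x ^ (-γ) = t ^ (γ - 1) * ∫ u in 0..t * b, g u * u ^ (-γ) := by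
  have hscale : ∀ u ∈ uIcc 0 (t * b), g u * (u / t) ^ (-γ) = t ^ γ * (g u * u ^ (-γ)) := by
    intro u hu
    rw [uIcc_of_le (by positivity)] at hu
    rw [div_rpow hu.1 ht.le, rpow_neg ht.le, rpow_neg hu.1]
    field_simp
  calc ∫ x in 0..b, g (t * x) * x ^ (-γ)
      = ∫ x in 0..b, (fun u ↦ g u * (u / t) ^ (-γ)) (t * x) := by
        simp only [mul_div_cancel_left₀ _ ht.ne']
    _ = t⁻¹ * ∫ u in 0..t * b, t ^ γ * (g u * u ^ (-γ)) := by
        rw [integral_comp_mul_left (fun u ↦ g u * (u / t) ^ (-γ)) ht.ne', mul_zero, smul_eq_mul,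
          integral_congr hscale]
    _ = t ^ (γ - 1) * ∫ u in 0..t * b, g u * u ^ (-γ) := by
        rw [intervalIntegral.integral_const_mul, ← mul_assoc, rpow_sub ht, rpow_one,
          div_eq_inv_mul]

/-- Riesz-kernel Fourier coefficients are commensurate with `n ^ (γ - 1)`. -/
theorem stmt_3 (γ : ℝ) (hγ0 : 0 < γ) (hγ1 : γ < 1)
    (q : ℕ → ℝ)
    (hq : ∀ n : ℕ, 1 ≤ n → q n = 2 * ∫ x in (0:ℝ)..π, Real.cos ((n : ℝ) * x) * x ^ (-γ)) :
    ∃ c C : ℝ, 0 < c ∧ c ≤ C ∧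
      ∀ n : ℕ, 1 ≤ n →
        c * (n : ℝ) ^ (γ - 1) ≤ q n ∧ q n ≤ C * (n : ℝ) ^ (γ - 1) ∧ 0 < q n := by
  set a := halfPeriodIntegral γ
  have ha_anti := strictAnti_halfPeriodIntegral hγ0 hγ1
  have ha_pos := halfPeriodIntegral_pos hγ0 hγ1
  have hgap : 0 < a 0 - a 1 := sub_pos.2 (ha_anti zero_lt_one)
  refine ⟨2 * (a 0 - a 1), 2 * a 0, by linarith, by linarith [ha_pos 1], fun n hn ↦ ?_⟩
  have hn0 : (0 : ℝ) < n := by exact_mod_cast hn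
  have hqn : q n = 2 * ∑ k ∈ Finset.range n, (-1) ^ k * a k * n ^ (γ - 1) := by
    rw [hq n hn, integral_comp_mul_left_mul_rpow_neg cos γ hn0 pi_pos.le,
      integral_cos_mul_rpow_neg_eq_sum hγ1, ← Finset.sum_mul]
    ring
  obtain ⟨hlow, hup⟩ :=
    alternating_sum_mem_Icc_of_ne_zero ha_anti.antitone (fun k ↦ (ha_pos k).le) (by omega : n ≠ 0)
  have hp : 0 < (n : ℝ) ^ (γ - 1) := rpow_pos_of_pos hn0 _
  rw [hqn, ← Finset.sum_mul]
  refine ⟨by nlinarith, by nlinarith, by nlinarith⟩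
end

section
/- Let H ∈ (0, 1/2) and t₀ > 0. Then there exists a constant c(t₀, H) < ∞ such that for every real s ≥ t₀ and every integer n ≥ 1: ∫₀^{2n²s} (s − v/(2n²))^{2H−1} · v^{2H−1} · e^{−v} dv ≤ c(t₀, H). -/
/-!
Bound the integrand pointwise, splitting at `v = c s / 2` (with `c = 2 n²`). Below that point
`s - v / c ≥ t₀ / 2`, so the first factor is at most `(t₀ / 2) ^ (a - 1)` and what remains is the
Gamma integrand. Above it `v ≥ t₀` and `e^{-v} ≤ e^{-c s / 2}`, while `(s - v / c) ^ (a - 1)`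
integrates to `c s ^ a / a`; the exponential absorbs the factor `c s` because `x e^{-x} ≤ e^{-1}`.
-/

open Real intervalIntegral MeasureTheory Set

lemma intervalIntegrable_rpow_sub_div {r : ℝ} (hr : -1 < r) (s c : ℝ) :
    IntervalIntegrable (fun v => (s - v / c) ^ r) volume 0 (c * s) := by
  have h := ((intervalIntegrable_rpow' hr (a := 0) (b := s)).comp_sub_left s).comp_mul_right
    (c := c⁻¹)
  simpa [div_eq_mul_inv, mul_comm c] using h.symm

lemma integral_rpow_sub_div {r : ℝ} (hr : -1 < r) (s : ℝ) {c : ℝ} (hc : c ≠ 0) :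
    ∫ v in (0 : ℝ)..c * s, (s - v / c) ^ r = c * (s ^ (r + 1) / (r + 1)) := by
  rw [integral_comp_div (fun u => (s - u) ^ r) hc, integral_comp_sub_left (fun u => u ^ r),
    integral_rpow (Or.inl hr), mul_div_cancel_left₀ s hc, zero_div, sub_zero, sub_self,
    zero_rpow (by linarith), sub_zero, smul_eq_mul]

lemma integral_exp_neg_mul_rpow_le_Gamma {a : ℝ} (ha : 0 < a) {T : ℝ} (hT : 0 ≤ T) :
    ∫ v in (0 : ℝ)..T, exp (-v) * v ^ (a - 1) ≤ Gamma a := by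
  rw [Gamma_eq_integral ha, integral_of_le hT]
  refine setIntegral_mono_set (GammaIntegral_convergent ha) ?_ Ioc_subset_Ioi_self.eventuallyLE
  filter_upwards [ae_restrict_mem measurableSet_Ioi] with v hv
  have : (0 : ℝ) < v := hv
  positivity

lemma intervalIntegrable_exp_neg_mul_rpow {a : ℝ} (ha : 0 < a) {T : ℝ} (hT : 0 ≤ T) :
    IntervalIntegrable (fun v => exp (-v) * v ^ (a - 1)) volume 0 T := by
  rw [intervalIntegrable_iff_integrableOn_Ioc_of_le hT]
  exact (GammaIntegral_convergent ha).mono_set Ioc_subset_Ioi_self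

lemma rpow_sub_div_mul_rpow_mul_exp_le {r t₀ s c v : ℝ} (hr : r ≤ 0) (ht₀ : 0 < t₀)
    (hs : t₀ ≤ s) (hc : 2 ≤ c) (hv0 : 0 ≤ v) (hvs : v ≤ c * s) :
    (s - v / c) ^ r * v ^ r * exp (-v) ≤
      (t₀ / 2) ^ r * (exp (-v) * v ^ r) + t₀ ^ r * exp (-(c * s / 2)) * (s - v / c) ^ r := by
  have hc0 : 0 < c := by linarith
  have hsv : v / c ≤ s := by rwa [div_le_iff₀' hc0]
  have hfirst : 0 ≤ (t₀ / 2) ^ r * (exp (-v) * v ^ r) := by positivity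
  have hsecond : 0 ≤ t₀ ^ r * exp (-(c * s / 2)) * (s - v / c) ^ r :=
    mul_nonneg (by positivity) (rpow_nonneg (sub_nonneg.2 hsv) r)
  rcases le_total v (c * s / 2) with hv | hv
  · have hbase : t₀ / 2 ≤ s - v / c := by
      have : v / c ≤ s / 2 := by
        rw [div_le_iff₀ hc0]; linarith
      linarith
    have : (s - v / c) ^ r ≤ (t₀ / 2) ^ r := rpow_le_rpow_of_nonpos (by positivity) hbase hr
    calc (s - v / c) ^ r * v ^ r * exp (-v) ≤ (t₀ / 2) ^ r * v ^ r * exp (-v) := by gcongr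
      _ ≤ _ := by linarith
  · have ht₀v : t₀ ≤ v := by nlinarith
    have hvr : v ^ r ≤ t₀ ^ r := rpow_le_rpow_of_nonpos ht₀ ht₀v hr
    have hexp : exp (-v) ≤ exp (-(c * s / 2)) := exp_le_exp.2 (by linarith)
    have hbase : 0 ≤ (s - v / c) ^ r := rpow_nonneg (sub_nonneg.2 hsv) r
    calc (s - v / c) ^ r * v ^ r * exp (-v)
        ≤ (s - v / c) ^ r * t₀ ^ r * exp (-(c * s / 2)) := by gcongr
      _ ≤ _ := by linarith

lemma integral_rpow_sub_div_mul_rpow_mul_exp_le {a t₀ s c : ℝ} (ha0 : 0 < a) (ha1 : a ≤ 1)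
    (ht₀ : 0 < t₀) (hs : t₀ ≤ s) (hc : 2 ≤ c) :
    ∫ v in (0 : ℝ)..c * s, (s - v / c) ^ (a - 1) * v ^ (a - 1) * exp (-v) ≤
      (t₀ / 2) ^ (a - 1) * Gamma a + 2 * exp (-1) * (t₀ ^ (a - 1)) ^ 2 / a := by
  have hr : -1 < a - 1 := by linarith
  have hs0 : 0 < s := ht₀.trans_le hs
  have hcs : 0 ≤ c * s := by positivity
  have hΓ := (intervalIntegrable_exp_neg_mul_rpow ha0 hcs).const_mul ((t₀ / 2) ^ (a - 1))
  have hB := (intervalIntegrable_rpow_sub_div hr s c).const_mul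
    (t₀ ^ (a - 1) * exp (-(c * s / 2)))
  have htail : t₀ ^ (a - 1) * exp (-(c * s / 2)) * (c * (s ^ (a - 1 + 1) / (a - 1 + 1))) ≤
      2 * exp (-1) * (t₀ ^ (a - 1)) ^ 2 / a := by
    have hsr : s ^ (a - 1) ≤ t₀ ^ (a - 1) := rpow_le_rpow_of_nonpos ht₀ hs (by linarith)
    rw [rpow_add_one hs0.ne', sub_add_cancel, le_div_iff₀ ha0]
    calc t₀ ^ (a - 1) * exp (-(c * s / 2)) * (c * (s ^ (a - 1) * s / a)) * a
        = 2 * t₀ ^ (a - 1) * s ^ (a - 1) * (c * s / 2 * exp (-(c * s / 2))) := by field_simp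
      _ ≤ 2 * t₀ ^ (a - 1) * t₀ ^ (a - 1) * exp (-1) := by
        gcongr
        exact mul_exp_neg_le_exp_neg_one _
      _ = 2 * exp (-1) * (t₀ ^ (a - 1)) ^ 2 := by ring
  calc ∫ v in (0 : ℝ)..c * s, (s - v / c) ^ (a - 1) * v ^ (a - 1) * exp (-v)
      ≤ ∫ v in (0 : ℝ)..c * s, ((t₀ / 2) ^ (a - 1) * (exp (-v) * v ^ (a - 1)) +
          t₀ ^ (a - 1) * exp (-(c * s / 2)) * (s - v / c) ^ (a - 1)) := by
        rw [integral_of_le hcs, integral_of_le hcs]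
        refine integral_mono_of_nonneg ?_ (hΓ.add hB).1 ?_
        all_goals filter_upwards [ae_restrict_mem measurableSet_Ioc] with v hv
        · have hsv : 0 ≤ s - v / c := by
            rw [sub_nonneg, div_le_iff₀' (by linarith)]; exact hv.2
          have := rpow_nonneg hsv (a - 1)
          have := rpow_nonneg hv.1.le (a - 1)
          exact mul_nonneg (by positivity) (exp_pos _).le
        · exact rpow_sub_div_mul_rpow_mul_exp_le (by linarith) ht₀ hs hc hv.1.le hv.2
    _ = (t₀ / 2) ^ (a - 1) * (∫ v in (0 : ℝ)..c * s, exp (-v) * v ^ (a - 1)) +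
          t₀ ^ (a - 1) * exp (-(c * s / 2)) * ∫ v in (0 : ℝ)..c * s, (s - v / c) ^ (a - 1) := by
        rw [integral_add hΓ hB, intervalIntegral.integral_const_mul,
          intervalIntegral.integral_const_mul]
    _ ≤ _ := by
        rw [integral_rpow_sub_div hr s (by linarith)]
        exact add_le_add (by gcongr; exact integral_exp_neg_mul_rpow_le_Gamma ha0 hcs) htail

/-- Lemma A.2 (technical integral bound). -/
theorem stmt_5 (H t₀ : ℝ) (hH0 : 0 < H) (hH1 : H < 1 / 2) (ht₀ : 0 < t₀) :
    ∃ c : ℝ, ∀ s : ℝ, t₀ ≤ s → ∀ n : ℕ, 1 ≤ n →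
      (∫ v in (0:ℝ)..(2 * (n : ℝ) ^ 2 * s),
          (s - v / (2 * (n : ℝ) ^ 2)) ^ (2 * H - 1) * v ^ (2 * H - 1) * Real.exp (-v)) ≤ c := by
  refine ⟨(t₀ / 2) ^ (2 * H - 1) * Gamma (2 * H) + 2 * exp (-1) * (t₀ ^ (2 * H - 1)) ^ 2 / (2 * H),
    fun s hs n hn => integral_rpow_sub_div_mul_rpow_mul_exp_le (by linarith) (by linarith) ht₀ hs ?_⟩
  have : (1 : ℝ) ≤ n := by exact_mod_cast hn
  nlinarith
end

section
/- Let H ∈ (0,1) with H ≠ 1/2, and fix s > 0. Define, for t > s, K(t,s) := (t/s)^{H−1/2} (t−s)^{H−1/2} − (H − 1/2) · s^{1/2−H} ∫_s^t u^{H−3/2} (u−s)^{H−1/2} du. Then for every t > s, the function t ↦ K(t,s) is differentiable at t with derivative ∂K/∂t (t,s) = (H − 1/2) (t−s)^{H−3/2} (s/t)^{1/2−H}. -/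
open Real intervalIntegral

/-- derivative of the fBm kernel `K^H(·, s)`. -/
theorem stmt_6 (H s : ℝ) (hH0 : 0 < H) (hH1 : H < 1) (hH : H ≠ 1 / 2) (hs : 0 < s) :
    ∀ t : ℝ, s < t →
      HasDerivAt
        (fun τ : ℝ =>
          (τ / s) ^ (H - 1 / 2) * (τ - s) ^ (H - 1 / 2) -
            (H - 1 / 2) * s ^ (1 / 2 - H) *
              ∫ u in s..τ, u ^ (H - 3 / 2) * (u - s) ^ (H - 1 / 2))
        ((H - 1 / 2) * (t - s) ^ (H - 3 / 2) * (s / t) ^ (1 / 2 - H)) t := by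
  intro t hst
  have ht : 0 < t := hs.trans hst
  have hts : 0 < t - s := sub_pos.mpr hst
  set f : ℝ → ℝ := fun u => u ^ (H - 3 / 2) * (u - s) ^ (H - 1 / 2) with hf
  -- integrability of f on [s, t]
  have hint : IntervalIntegrable f MeasureTheory.volume s t := by
    have h1 : IntervalIntegrable (fun u : ℝ => (u - s) ^ (H - 1 / 2))
        MeasureTheory.volume s t := by
      have := (intervalIntegrable_rpow' (a := 0) (b := t - s) (r := H - 1 / 2)
        (by linarith)).comp_sub_right s
      simpa using this
    have h2 : ContinuousOn (fun u : ℝ => u ^ (H - 3 / 2)) (Set.uIcc s t) := by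
      apply ContinuousOn.rpow_const continuousOn_id
      intro x hx
      rw [Set.uIcc_of_le hst.le] at hx
      exact Or.inl (ne_of_gt (lt_of_lt_of_le hs hx.1))
    exact h1.continuousOn_mul h2
  -- continuity of f at t
  have hcont : ContinuousAt f t := by
    have c1 : ContinuousAt (fun u : ℝ => u ^ (H - 3 / 2)) t :=
      Real.continuousAt_rpow_const t _ (Or.inl ht.ne')
    have c2 : ContinuousAt (fun u : ℝ => (u - s) ^ (H - 1 / 2)) t := by
      exact (((continuous_id.sub continuous_const).continuousAt)).rpow_const (Or.inl hts.ne')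
    exact c1.mul c2
  have hmeas : StronglyMeasurableAtFilter f (nhds t) := by
    apply ContinuousAt.stronglyMeasurableAtFilter (s := Set.Ioi s)
    · exact isOpen_Ioi
    · intro x hx
      have hx' : (0:ℝ) < x := hs.trans hx
      have hxs : (0:ℝ) < x - s := sub_pos.mpr hx
      exact (Real.continuousAt_rpow_const x _ (Or.inl hx'.ne')).mul
        (((continuous_id.sub continuous_const).continuousAt).rpow_const (Or.inl hxs.ne'))
    · exact hst
  have hFTC : HasDerivAt (fun τ : ℝ => ∫ u in s..τ, f u) (f t) t :=
    intervalIntegral.integral_hasDerivAt_right hint hmeas hcont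
  -- derivative of the first term
  have hd1 : HasDerivAt (fun τ : ℝ => (τ / s) ^ (H - 1 / 2))
      (1 / s * (H - 1 / 2) * (t / s) ^ (H - 1 / 2 - 1)) t := by
    have hdiv : HasDerivAt (fun τ : ℝ => τ / s) (1 / s) t := by
      simpa using (hasDerivAt_id t).div_const s
    exact hdiv.rpow_const (Or.inl (ne_of_gt (div_pos ht hs)))
  have hd2 : HasDerivAt (fun τ : ℝ => (τ - s) ^ (H - 1 / 2))
      (1 * (H - 1 / 2) * (t - s) ^ (H - 1 / 2 - 1)) t := by
    have hsub : HasDerivAt (fun τ : ℝ => τ - s) 1 t := (hasDerivAt_id t).sub_const s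
    exact hsub.rpow_const (Or.inl hts.ne')
  have hmain : HasDerivAt
      (fun τ : ℝ =>
        (τ / s) ^ (H - 1 / 2) * (τ - s) ^ (H - 1 / 2) -
          (H - 1 / 2) * s ^ (1 / 2 - H) * ∫ u in s..τ, f u)
      (1 / s * (H - 1 / 2) * (t / s) ^ (H - 1 / 2 - 1) * (t - s) ^ (H - 1 / 2) +
        (t / s) ^ (H - 1 / 2) * (1 * (H - 1 / 2) * (t - s) ^ (H - 1 / 2 - 1)) -
        (H - 1 / 2) * s ^ (1 / 2 - H) * f t) t :=
    (hd1.mul hd2).sub ((hFTC.const_mul _))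
  convert hmain using 1
  rw [hf]
  simp only
  have hst' : (0:ℝ) < t / s := div_pos ht hs
  have e1 : (t / s) ^ (H - 1 / 2 - 1) = (t / s) ^ (H - 1 / 2) / (t / s) := by
    rw [Real.rpow_sub hst', Real.rpow_one]
  have e2 : (t / s) ^ (H - 1 / 2) = t ^ (H - 1 / 2) / s ^ (H - 1 / 2) :=
    Real.div_rpow ht.le hs.le _
  have e3 : (s / t) ^ (1 / 2 - H) = (t / s) ^ (H - 1 / 2) := by
    rw [show (1:ℝ) / 2 - H = -(H - 1 / 2) by ring, Real.rpow_neg (div_pos hs ht).le,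
      ← Real.inv_rpow (div_pos hs ht).le, inv_div]
  have e4 : s ^ ((1:ℝ) / 2 - H) = (s ^ (H - 1 / 2))⁻¹ := by
    rw [show (1:ℝ) / 2 - H = -(H - 1 / 2) by ring, Real.rpow_neg hs.le]
  have e5 : t ^ (H - 3 / 2) = t ^ (H - 1 / 2) / t := by
    rw [show H - 3 / 2 = H - 1 / 2 - 1 by ring, Real.rpow_sub ht, Real.rpow_one]
  have e6 : (t - s) ^ (H - 3 / 2) = (t - s) ^ (H - 1 / 2) / (t - s) := by
    rw [show H - 3 / 2 = H - 1 / 2 - 1 by ring, Real.rpow_sub hts, Real.rpow_one]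
  have hsne : s ^ (H - 1 / 2) ≠ 0 := (Real.rpow_pos_of_pos hs _).ne'
  have htne : t ^ (H - 1 / 2) ≠ 0 := (Real.rpow_pos_of_pos ht _).ne'
  have e7 : (t - s) ^ (H - 1 / 2 - 1) = (t - s) ^ (H - 1 / 2) / (t - s) := by
    rw [Real.rpow_sub hts, Real.rpow_one]
  rw [e1, e3, e4, e5, e6, e7, e2]
  field_simp
  ring
end

section
/- Let H ∈ (0, 1/2) and α ∈ (0,1]. Then there exists a finite constant c (depending only on H and α) such that for all K ≥ 1: e^{−K} K^{−α−1} ∫₀^∞ e^{−2x} (∫₀^x u^{H−3/2} (e^u − 1) du) (∫_x^{x+K} v^{H−3/2} (e^v − 1) dv) dx ≤ c · K^{−α + H − 1/2}. -/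
open Real MeasureTheory intervalIntegral

-- e^u - 1 ≤ u * e^u for u ≥ 0 (in fact all u)
lemma exp_sub_one_le (u : ℝ) : Real.exp u - 1 ≤ u * Real.exp u := by
  have h := mul_le_mul_of_nonneg_right (Real.add_one_le_exp (-u)) (Real.exp_pos u).le
  rw [← Real.exp_add] at h
  simp at h
  nlinarith

section aux
variable {H : ℝ} (hH0 : 0 < H) (hH1 : H < 1 / 2)

lemma f_nonneg {u : ℝ} (hu : 0 ≤ u) : 0 ≤ u ^ (H - 3/2) * (Real.exp u - 1) := by
  have h1 : (0:ℝ) ≤ u ^ (H - 3/2) := Real.rpow_nonneg hu _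
  have h2 : (1:ℝ) ≤ Real.exp u := Real.one_le_exp hu
  nlinarith

lemma f_contOn {s : Set ℝ} (hs : ∀ x ∈ s, x ≠ 0) :
    ContinuousOn (fun u : ℝ => u ^ (H - 3/2) * (Real.exp u - 1)) s := by
  intro x hx
  exact (((Real.continuousAt_rpow_const x _ (Or.inl (hs x hx))).mul
    ((Real.continuous_exp.continuousAt).sub continuousAt_const))).continuousWithinAt

lemma f_le_small {u : ℝ} (hu0 : 0 < u) (hu1 : u ≤ 1) :
    u ^ (H - 3/2) * (Real.exp u - 1) ≤ Real.exp 1 * u ^ (H - 1/2) := by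
  have h1 : Real.exp u - 1 ≤ u * Real.exp u := exp_sub_one_le u
  have h2 : u ^ (H - 3/2) * (u * Real.exp u) = u ^ (H - 1/2) * Real.exp u := by
    rw [← mul_assoc, ← Real.rpow_add_one hu0.ne']
    ring_nf
  have h3 : (0:ℝ) ≤ u ^ (H - 3/2) := Real.rpow_nonneg hu0.le _
  have h4 : Real.exp u ≤ Real.exp 1 := Real.exp_le_exp.2 hu1
  calc u ^ (H - 3/2) * (Real.exp u - 1) ≤ u ^ (H - 3/2) * (u * Real.exp u) := by
        exact mul_le_mul_of_nonneg_left h1 h3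
    _ = u ^ (H - 1/2) * Real.exp u := h2
    _ ≤ u ^ (H - 1/2) * Real.exp 1 := by
        exact mul_le_mul_of_nonneg_left h4 (Real.rpow_nonneg hu0.le _)
    _ = Real.exp 1 * u ^ (H - 1/2) := mul_comm _ _

include hH0 hH1 in
lemma II_small {x : ℝ} (hx0 : 0 ≤ x) (hx1 : x ≤ 1) :
    IntervalIntegrable (fun u : ℝ => u ^ (H - 3/2) * (Real.exp u - 1)) volume 0 x := by
  rw [intervalIntegrable_iff_integrableOn_Ioc_of_le hx0]
  have hg : IntegrableOn (fun u : ℝ => Real.exp 1 * u ^ (H - 1/2)) (Set.Ioc 0 x) := by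
    have := (intervalIntegrable_rpow' (a := 0) (b := x) (r := H - 1/2) (by linarith)).const_mul
      (Real.exp 1)
    rwa [intervalIntegrable_iff_integrableOn_Ioc_of_le hx0] at this
  have hmeas : AEStronglyMeasurable (fun u : ℝ => u ^ (H - 3/2) * (Real.exp u - 1))
      (volume.restrict (Set.Ioc 0 x)) :=
    (f_contOn (fun y hy => ne_of_gt hy.1)).aestronglyMeasurable measurableSet_Ioc
  refine hg.integrable.mono hmeas ?_
  filter_upwards [ae_restrict_mem measurableSet_Ioc] with u hu
  have h1 := f_nonneg (H := H) hu.1.le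
  have h2 := f_le_small (H := H) hu.1 (hu.2.trans hx1)
  have h3 : (0:ℝ) ≤ Real.exp 1 * u ^ (H - 1/2) :=
    mul_nonneg (Real.exp_pos 1).le (Real.rpow_nonneg hu.1.le _)
  rw [Real.norm_eq_abs, Real.norm_eq_abs, abs_of_nonneg h1, abs_of_nonneg h3]
  exact h2

include hH0 hH1 in
lemma A_le_small {x : ℝ} (hx0 : 0 < x) (hx1 : x ≤ 1) :
    (∫ u in (0:ℝ)..x, u ^ (H - 3/2) * (Real.exp u - 1)) ≤
      Real.exp 1 / (H + 1/2) * x ^ (H + 1/2) := by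
  have hg : IntervalIntegrable (fun u : ℝ => Real.exp 1 * u ^ (H - 1/2)) volume 0 x :=
    (intervalIntegrable_rpow' (by linarith)).const_mul _
  have hcomp : ∀ u ∈ Set.Icc (0:ℝ) x, u ^ (H - 3/2) * (Real.exp u - 1) ≤
      Real.exp 1 * u ^ (H - 1/2) := by
    intro u hu
    rcases eq_or_lt_of_le hu.1 with h | h
    · rw [← h, Real.exp_zero, sub_self, mul_zero]
      positivity
    · exact f_le_small h (hu.2.trans hx1)
  have hmono := intervalIntegral.integral_mono_on hx0.le (II_small hH0 hH1 hx0.le hx1) hg hcomp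
  refine hmono.trans ?_
  rw [intervalIntegral.integral_const_mul, integral_rpow (Or.inl (by linarith))]
  rw [Real.zero_rpow (by intro h'; nlinarith : H - 1/2 + 1 ≠ 0)]
  have h5 : H - 1/2 + 1 = H + 1/2 := by ring
  rw [h5, sub_zero]
  apply le_of_eq
  ring

end aux

section aux2
variable {H : ℝ} (hH0 : 0 < H) (hH1 : H < 1 / 2)

lemma A_nonneg {x : ℝ} (hx : 0 ≤ x) :
    0 ≤ ∫ u in (0:ℝ)..x, u ^ (H - 3/2) * (Real.exp u - 1) :=
  intervalIntegral.integral_nonneg hx (fun u hu => f_nonneg hu.1)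

lemma B_nonneg {x K : ℝ} (hx : 0 ≤ x) (hK : 0 ≤ K) :
    0 ≤ ∫ v in x..(x + K), v ^ (H - 3/2) * (Real.exp v - 1) :=
  intervalIntegral.integral_nonneg (by linarith) (fun v hv => f_nonneg (hx.trans hv.1))

include hH1 in
lemma B_le {x K : ℝ} (hx : 0 < x) (hK : 0 ≤ K) :
    (∫ v in x..(x + K), v ^ (H - 3/2) * (Real.exp v - 1)) ≤
      x ^ (H - 3/2) * Real.exp (x + K) := by
  have hxK : x ≤ x + K := by linarith
  have hfII : IntervalIntegrable (fun v : ℝ => v ^ (H - 3/2) * (Real.exp v - 1))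
      volume x (x + K) := by
    apply ContinuousOn.intervalIntegrable
    rw [Set.uIcc_of_le hxK]
    exact f_contOn (fun y hy => (hx.trans_le hy.1).ne')
  have hgII : IntervalIntegrable (fun v : ℝ => x ^ (H - 3/2) * Real.exp v)
      volume x (x + K) := (continuous_const.mul Real.continuous_exp).intervalIntegrable _ _
  have hcomp : ∀ v ∈ Set.Icc x (x + K), v ^ (H - 3/2) * (Real.exp v - 1) ≤
      x ^ (H - 3/2) * Real.exp v := by
    intro v hv
    have h1 : v ^ (H - 3/2) ≤ x ^ (H - 3/2) :=
      Real.rpow_le_rpow_of_nonpos hx hv.1 (by linarith)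
    have h2 : Real.exp v - 1 ≤ Real.exp v := by linarith [Real.exp_pos v]
    have h3 : (0:ℝ) ≤ Real.exp v - 1 := by
      have := Real.one_le_exp (show (0:ℝ) ≤ v by linarith [hv.1]); linarith
    exact mul_le_mul h1 h2 h3 (Real.rpow_nonneg hx.le _)
  have hmono := intervalIntegral.integral_mono_on hxK hfII hgII hcomp
  refine hmono.trans ?_
  rw [intervalIntegral.integral_const_mul, integral_exp]
  have h4 : (0:ℝ) ≤ x ^ (H - 3/2) := Real.rpow_nonneg hx.le _
  nlinarith [Real.exp_pos x]

include hH0 hH1 in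
lemma A_le_big {x : ℝ} (hx : 1 ≤ x) :
    (∫ u in (0:ℝ)..x, u ^ (H - 3/2) * (Real.exp u - 1)) ≤
      Real.exp 1 / (H + 1/2) + Real.exp x := by
  have h01 : IntervalIntegrable (fun u : ℝ => u ^ (H - 3/2) * (Real.exp u - 1))
      volume 0 1 := II_small hH0 hH1 zero_le_one le_rfl
  have h1x : IntervalIntegrable (fun u : ℝ => u ^ (H - 3/2) * (Real.exp u - 1))
      volume 1 x := by
    apply ContinuousOn.intervalIntegrable
    rw [Set.uIcc_of_le hx]
    exact f_contOn (fun y hy => (lt_of_lt_of_le zero_lt_one hy.1).ne')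
  have hsplit : (∫ u in (0:ℝ)..x, u ^ (H - 3/2) * (Real.exp u - 1)) =
      (∫ u in (0:ℝ)..1, u ^ (H - 3/2) * (Real.exp u - 1)) +
      (∫ u in (1:ℝ)..x, u ^ (H - 3/2) * (Real.exp u - 1)) :=
    (intervalIntegral.integral_add_adjacent_intervals h01 h1x).symm
  have hpart1 : (∫ u in (0:ℝ)..1, u ^ (H - 3/2) * (Real.exp u - 1)) ≤
      Real.exp 1 / (H + 1/2) := by
    have := A_le_small hH0 hH1 zero_lt_one le_rfl
    rwa [Real.one_rpow, mul_one] at this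
  have hpart2 : (∫ u in (1:ℝ)..x, u ^ (H - 3/2) * (Real.exp u - 1)) ≤ Real.exp x := by
    have hgII : IntervalIntegrable Real.exp volume 1 x :=
      Real.continuous_exp.intervalIntegrable _ _
    have hcomp : ∀ u ∈ Set.Icc (1:ℝ) x, u ^ (H - 3/2) * (Real.exp u - 1) ≤ Real.exp u := by
      intro u hu
      have h1 : u ^ (H - 3/2) ≤ 1 :=
        Real.rpow_le_one_of_one_le_of_nonpos hu.1 (by linarith)
      have h3 : (0:ℝ) ≤ Real.exp u - 1 := by
        have := Real.one_le_exp (show (0:ℝ) ≤ u by linarith [hu.1]); linarith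
      nlinarith [Real.exp_pos u, Real.rpow_nonneg (show (0:ℝ) ≤ u by linarith [hu.1]) (H - 3/2)]
    have hmono := intervalIntegral.integral_mono_on hx h1x hgII hcomp
    rw [integral_exp] at hmono
    have := Real.exp_pos 1
    linarith
  linarith

end aux2

/-- estimate of the terms `J_{4,3,1}` and `J_{4,3,2}`. -/
theorem stmt_14 (H α : ℝ) (hH0 : 0 < H) (hH1 : H < 1 / 2) (hα0 : 0 < α) (hα1 : α ≤ 1) :
    ∃ c : ℝ, ∀ K : ℝ, 1 ≤ K →
      Real.exp (-K) * K ^ (-α - 1) *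
          (∫ x in Set.Ioi (0 : ℝ), Real.exp (-2 * x) *
            (∫ u in (0:ℝ)..x, u ^ (H - 3 / 2) * (Real.exp u - 1)) *
            (∫ v in x..(x + K), v ^ (H - 3 / 2) * (Real.exp v - 1))) ≤
        c * K ^ (-α + H - 1 / 2) := by
  set C : ℝ := Real.exp 1 / (H + 1/2) + 1 with hCdef
  have hC0 : 0 < C := by
    have := Real.exp_pos 1
    have h2 : (0:ℝ) < H + 1/2 := by linarith
    positivity
  set hfun : ℝ → ℝ := fun x => if x ≤ 1 then x ^ (2*H - 1) else x ^ (H - 3/2) with hhdef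
  have hInt : IntegrableOn hfun (Set.Ioi (0:ℝ)) := by
    have e1 : IntegrableOn hfun (Set.Ioc (0:ℝ) 1) := by
      have base : IntegrableOn (fun x : ℝ => x ^ (2*H - 1)) (Set.Ioc (0:ℝ) 1) := by
        have := intervalIntegrable_rpow' (a := 0) (b := 1) (r := 2*H - 1) (by linarith)
        rwa [intervalIntegrable_iff_integrableOn_Ioc_of_le zero_le_one] at this
      exact base.congr_fun (fun x hx => (if_pos hx.2).symm) measurableSet_Ioc
    have e2 : IntegrableOn hfun (Set.Ioi (1:ℝ)) := by
      have base : IntegrableOn (fun x : ℝ => x ^ (H - 3/2)) (Set.Ioi (1:ℝ)) :=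
        integrableOn_Ioi_rpow_of_lt (by linarith) one_pos
      exact base.congr_fun (fun x hx => (if_neg (not_le.2 hx)).symm) measurableSet_Ioi
    rw [← Set.Ioc_union_Ioi_eq_Ioi (zero_le_one)]
    exact e1.union e2
  have hh_nonneg : ∀ x ∈ Set.Ioi (0:ℝ), 0 ≤ hfun x := by
    intro x hx
    simp only [hhdef]
    split <;> exact Real.rpow_nonneg (le_of_lt hx) _
  refine ⟨C * ∫ x in Set.Ioi (0:ℝ), hfun x, fun K hK => ?_⟩
  have hc0 : 0 ≤ C * ∫ x in Set.Ioi (0:ℝ), hfun x :=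
    mul_nonneg hC0.le (setIntegral_nonneg measurableSet_Ioi hh_nonneg)
  have hK0 : (0:ℝ) < K := lt_of_lt_of_le one_pos hK
  -- pointwise bound
  have key : ∀ x ∈ Set.Ioi (0:ℝ),
      Real.exp (-2 * x) *
        (∫ u in (0:ℝ)..x, u ^ (H - 3/2) * (Real.exp u - 1)) *
        (∫ v in x..(x + K), v ^ (H - 3/2) * (Real.exp v - 1)) ≤
      Real.exp K * C * hfun x := by
    intro x hx
    have hx0 : (0:ℝ) < x := hx
    have hA0 : 0 ≤ ∫ u in (0:ℝ)..x, u ^ (H - 3/2) * (Real.exp u - 1) := A_nonneg hx0.le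
    have hB0 : 0 ≤ ∫ v in x..(x + K), v ^ (H - 3/2) * (Real.exp v - 1) :=
      B_nonneg hx0.le (by linarith)
    have hBle := B_le hH1 hx0 (show (0:ℝ) ≤ K by linarith)
    have hxh : (0:ℝ) ≤ x ^ (H - 3/2) := Real.rpow_nonneg hx0.le _
    by_cases hx1 : x ≤ 1
    · have hAle := A_le_small hH0 hH1 hx0 hx1
      have step1 : Real.exp (-2 * x) *
          (∫ u in (0:ℝ)..x, u ^ (H - 3/2) * (Real.exp u - 1)) *
          (∫ v in x..(x + K), v ^ (H - 3/2) * (Real.exp v - 1)) ≤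
          Real.exp (-2 * x) * (Real.exp 1 / (H + 1/2) * x ^ (H + 1/2)) *
            (x ^ (H - 3/2) * Real.exp (x + K)) := by
        have hnn1 : (0:ℝ) ≤ Real.exp (-2 * x) *
            (Real.exp 1 / (H + 1/2) * x ^ (H + 1/2)) := by
          have : (0:ℝ) < H + 1/2 := by linarith
          positivity
        refine mul_le_mul ?_ hBle hB0 hnn1
        exact mul_le_mul_of_nonneg_left hAle (Real.exp_pos _).le
      refine step1.trans ?_
      have e2 : x ^ (H + 1/2) * x ^ (H - 3/2) = x ^ (2*H - 1) := by
        rw [← Real.rpow_add hx0]; congr 1; ring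
      have e3 : Real.exp (-2 * x) * Real.exp (x + K) = Real.exp (K - x) := by
        rw [← Real.exp_add]; ring_nf
      have e1 : Real.exp (-2 * x) * (Real.exp 1 / (H + 1/2) * x ^ (H + 1/2)) *
            (x ^ (H - 3/2) * Real.exp (x + K)) =
          Real.exp 1 / (H + 1/2) * (x ^ (H + 1/2) * x ^ (H - 3/2)) *
            (Real.exp (-2 * x) * Real.exp (x + K)) := by ring
      rw [e1, e2, e3]
      have h2H : (0:ℝ) ≤ x ^ (2*H - 1) := Real.rpow_nonneg hx0.le _
      have hexp : Real.exp (K - x) ≤ Real.exp K := Real.exp_le_exp.2 (by linarith)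
      have haC : Real.exp 1 / (H + 1/2) ≤ C := by simp [hCdef]
      have hfx : hfun x = x ^ (2*H - 1) := if_pos hx1
      rw [hfx]
      have ha0 : (0:ℝ) ≤ Real.exp 1 / (H + 1/2) := by
        have : (0:ℝ) < H + 1/2 := by linarith
        positivity
      calc Real.exp 1 / (H + 1/2) * x ^ (2*H - 1) * Real.exp (K - x)
          ≤ Real.exp 1 / (H + 1/2) * x ^ (2*H - 1) * Real.exp K :=
            mul_le_mul_of_nonneg_left hexp (by positivity)
        _ ≤ C * x ^ (2*H - 1) * Real.exp K := by
            exact mul_le_mul_of_nonneg_right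
              (mul_le_mul_of_nonneg_right haC h2H) (Real.exp_pos _).le
        _ = Real.exp K * C * x ^ (2*H - 1) := by ring
    · push_neg at hx1
      have hAle : (∫ u in (0:ℝ)..x, u ^ (H - 3/2) * (Real.exp u - 1)) ≤
          C * Real.exp x := by
        have h1 := A_le_big hH0 hH1 hx1.le
        have h2 : (1:ℝ) ≤ Real.exp x := Real.one_le_exp (by linarith)
        have ha0 : (0:ℝ) ≤ Real.exp 1 / (H + 1/2) := by
          have : (0:ℝ) < H + 1/2 := by linarith
          positivity
        have : C * Real.exp x = Real.exp 1 / (H + 1/2) * Real.exp x + Real.exp x := by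
          rw [hCdef]; ring
        nlinarith
      have step1 : Real.exp (-2 * x) *
          (∫ u in (0:ℝ)..x, u ^ (H - 3/2) * (Real.exp u - 1)) *
          (∫ v in x..(x + K), v ^ (H - 3/2) * (Real.exp v - 1)) ≤
          Real.exp (-2 * x) * (C * Real.exp x) * (x ^ (H - 3/2) * Real.exp (x + K)) := by
        have hnn1 : (0:ℝ) ≤ Real.exp (-2 * x) * (C * Real.exp x) := by positivity
        refine mul_le_mul ?_ hBle hB0 hnn1
        exact mul_le_mul_of_nonneg_left hAle (Real.exp_pos _).le
      refine step1.trans ?_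
      have e1 : Real.exp (-2 * x) * (C * Real.exp x) * (x ^ (H - 3/2) * Real.exp (x + K)) =
          C * x ^ (H - 3/2) * (Real.exp (-2 * x) * Real.exp x * Real.exp (x + K)) := by ring
      have e2 : Real.exp (-2 * x) * Real.exp x * Real.exp (x + K) = Real.exp K := by
        rw [← Real.exp_add, ← Real.exp_add]; ring_nf
      have hfx : hfun x = x ^ (H - 3/2) := if_neg (not_le.2 hx1)
      rw [e1, e2, hfx]
      apply le_of_eq; ring
  -- integral comparison
  have hGInt : Integrable (fun x => Real.exp K * C * hfun x)
      (volume.restrict (Set.Ioi (0:ℝ))) := hInt.const_mul _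
  have hFG : (∫ x in Set.Ioi (0:ℝ), Real.exp (-2 * x) *
        (∫ u in (0:ℝ)..x, u ^ (H - 3/2) * (Real.exp u - 1)) *
        (∫ v in x..(x + K), v ^ (H - 3/2) * (Real.exp v - 1))) ≤
      ∫ x in Set.Ioi (0:ℝ), Real.exp K * C * hfun x := by
    refine integral_mono_of_nonneg ?_ hGInt ?_
    · refine ae_restrict_of_forall_mem measurableSet_Ioi (fun x hx => ?_)
      have hx0 : (0:ℝ) < x := hx
      exact mul_nonneg (mul_nonneg (Real.exp_pos _).le (A_nonneg hx0.le))
        (B_nonneg hx0.le (by linarith))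
    · exact ae_restrict_of_forall_mem measurableSet_Ioi key
  rw [MeasureTheory.integral_const_mul] at hFG
  have hE0 : (0:ℝ) ≤ Real.exp (-K) * K ^ (-α - 1) := by positivity
  calc Real.exp (-K) * K ^ (-α - 1) *
        (∫ x in Set.Ioi (0:ℝ), Real.exp (-2 * x) *
          (∫ u in (0:ℝ)..x, u ^ (H - 3/2) * (Real.exp u - 1)) *
          (∫ v in x..(x + K), v ^ (H - 3/2) * (Real.exp v - 1)))
      ≤ Real.exp (-K) * K ^ (-α - 1) *
          (Real.exp K * C * ∫ x in Set.Ioi (0:ℝ), hfun x) :=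
        mul_le_mul_of_nonneg_left hFG hE0
    _ = (C * ∫ x in Set.Ioi (0:ℝ), hfun x) * K ^ (-α - 1) *
          (Real.exp (-K) * Real.exp K) := by ring
    _ = (C * ∫ x in Set.Ioi (0:ℝ), hfun x) * K ^ (-α - 1) := by
        rw [← Real.exp_add]; simp
    _ ≤ (C * ∫ x in Set.Ioi (0:ℝ), hfun x) * K ^ (-α + H - 1/2) :=
        mul_le_mul_of_nonneg_left
          (Real.rpow_le_rpow_of_exponent_le hK (by linarith)) hc0
end

section
/- Let H ∈ (0, 1/2) and α ∈ (0,1]. Then there exists a finite constant c (depending only on H and α) such that for all K ≥ 1: ∫₀^∞ e^{−2x} (∫₀^x u^{H−3/2} (e^u − 1) du) (∫_{x+K}^∞ v^{H−3/2} (e^v − 1) (v−x)^{−α−1} e^{−(v−x)} dv) dx ≤ c · K^{−α + H − 3/2}. -/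
/-!
For `v > x + K` we have `(e^v - 1) e^{-(v-x)} ≤ e^x` and `(v - x)^{-α-1} ≤ K^{-α-1}`, so the
inner `v`-integral is at most `e^x K^{-α-1} ∫_{x+K}^∞ v^{H-3/2} dv`, which is in turn at most
`e^x K^{-α+H-3/2} / (1/2 - H)`.
The estimate thus reduces to the finiteness of `∫_0^∞ e^{-x} F(x) dx` with
`F(x) = ∫_0^x u^{H-3/2} (e^u - 1) du`. Near `0`, `e^u - 1 ≤ u e^u` gives
`F(x) ≤ e^x x^{H+1/2} / (H + 1/2)`; for large `x`, splitting `F` at `x/2` gives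
`F(x) = O(x^{H-3/2} e^x)`, and `x^{H-3/2}` is integrable at infinity because `H < 1/2`.
-/

open Real MeasureTheory intervalIntegral

open Set

noncomputable def weight (H u : ℝ) : ℝ := u ^ (H - 3 / 2) * (exp u - 1)

lemma exp_sub_one_le_mul_exp (u : ℝ) : exp u - 1 ≤ u * exp u := by
  have h := mul_le_mul_of_nonneg_right (add_one_le_exp (-u)) (exp_pos u).le
  rw [← exp_add, neg_add_cancel, exp_zero] at h
  linarith

section Weight

variable {H : ℝ}

lemma weight_nonneg (H : ℝ) {u : ℝ} (hu : 0 ≤ u) : 0 ≤ weight H u :=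
  mul_nonneg (rpow_nonneg hu _) (by linarith [one_le_exp hu])

lemma weight_le_rpow_mul_exp (H : ℝ) {u : ℝ} (hu : 0 ≤ u) :
    weight H u ≤ u ^ (H - 3 / 2) * exp u :=
  mul_le_mul_of_nonneg_left (by linarith [exp_pos u]) (rpow_nonneg hu _)

lemma weight_le_exp_mul_rpow (H : ℝ) {u x : ℝ} (hu : 0 ≤ u) (hux : u ≤ x) :
    weight H u ≤ exp x * u ^ (H - 1 / 2) := by
  rcases hu.eq_or_lt with rfl | hu
  · simp only [weight, exp_zero, sub_self, mul_zero]
    positivity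
  calc weight H u ≤ u ^ (H - 3 / 2) * (u * exp x) :=
        mul_le_mul_of_nonneg_left ((exp_sub_one_le_mul_exp u).trans
          (mul_le_mul_of_nonneg_left (exp_le_exp.2 hux) hu.le)) (rpow_nonneg hu.le _)
    _ = exp x * u ^ (H - 1 / 2) := by
      rw [← mul_assoc, ← rpow_add_one hu.ne']; ring_nf

lemma intervalIntegrable_weight_zero (hH : -1 / 2 < H) {x : ℝ} (hx : 0 ≤ x) :
    IntervalIntegrable (weight H) volume 0 x := by
  refine ((intervalIntegrable_rpow' (r := H - 1 / 2) (by linarith)).const_mul (exp x)).mono_fun'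
    (by unfold weight; fun_prop) ?_
  rw [uIoc_of_le hx]
  filter_upwards [ae_restrict_mem measurableSet_Ioc] with u hu
  rw [norm_of_nonneg (weight_nonneg H hu.1.le)]
  exact weight_le_exp_mul_rpow H hu.1.le hu.2

lemma intervalIntegrable_weight (hH : -1 / 2 < H) {a b : ℝ} (ha : 0 ≤ a) (hb : 0 ≤ b) :
    IntervalIntegrable (weight H) volume a b :=
  (intervalIntegrable_weight_zero hH ha).symm.trans (intervalIntegrable_weight_zero hH hb)

lemma integral_weight_nonneg (H : ℝ) {x : ℝ} (hx : 0 ≤ x) : 0 ≤ ∫ u in 0..x, weight H u :=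
  integral_nonneg hx fun _ hu ↦ weight_nonneg H hu.1

lemma integral_weight_le_exp_mul (hH : -1 / 2 < H) {x : ℝ} (hx : 0 ≤ x) :
    ∫ u in 0..x, weight H u ≤ exp x * (x ^ (H + 1 / 2) / (H + 1 / 2)) := by
  calc ∫ u in 0..x, weight H u ≤ ∫ u in 0..x, exp x * u ^ (H - 1 / 2) :=
        integral_mono_on hx (intervalIntegrable_weight_zero hH hx)
          ((intervalIntegrable_rpow' (by linarith)).const_mul _)
          fun u hu ↦ weight_le_exp_mul_rpow H hu.1 hu.2
    _ = exp x * (x ^ (H + 1 / 2) / (H + 1 / 2)) := by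
      rw [intervalIntegral.integral_const_mul, integral_rpow (Or.inl (by linarith)),
        zero_rpow (by linarith), show H - 1 / 2 + 1 = H + 1 / 2 by ring, sub_zero]

lemma rpow_le_two_mul_rpow_sub_two_mul_exp (s : ℝ) {y : ℝ} (hy : 0 < y) :
    y ^ s ≤ 2 * y ^ (s - 2) * exp y := by
  have hsq : y ^ (2 : ℕ) ≤ 2 * exp y := by
    have := pow_div_factorial_le_exp y hy.le 2
    rw [Nat.factorial_two, Nat.cast_two] at this
    linarith
  calc y ^ s = y ^ (s - 2) * y ^ (2 : ℕ) := by
        rw [← rpow_natCast, ← rpow_add hy]; norm_num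
    _ ≤ y ^ (s - 2) * (2 * exp y) := mul_le_mul_of_nonneg_left hsq (rpow_nonneg hy.le _)
    _ = 2 * y ^ (s - 2) * exp y := by ring

lemma integral_weight_le_mul_exp (hH₀ : -1 / 2 < H) (hH₁ : H ≤ 3 / 2) {x : ℝ} (hx : 0 < x) :
    ∫ u in 0..x, weight H u ≤ (2 / (H + 1 / 2) + 1) * (x / 2) ^ (H - 3 / 2) * exp x := by
  have hx2 : 0 < x / 2 := by linarith
  have hlower : ∫ u in 0..x / 2, weight H u ≤ 2 / (H + 1 / 2) * (x / 2) ^ (H - 3 / 2) * exp x :=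
    calc ∫ u in 0..x / 2, weight H u ≤ exp (x / 2) * ((x / 2) ^ (H + 1 / 2) / (H + 1 / 2)) :=
          integral_weight_le_exp_mul hH₀ hx2.le
      _ ≤ exp (x / 2) * (2 * (x / 2) ^ (H + 1 / 2 - 2) * exp (x / 2) / (H + 1 / 2)) := by
          gcongr
          · linarith
          · exact rpow_le_two_mul_rpow_sub_two_mul_exp _ hx2
      _ = 2 / (H + 1 / 2) * (x / 2) ^ (H - 3 / 2) * exp x := by
          rw [show H + 1 / 2 - 2 = H - 3 / 2 by ring, show x = x / 2 + x / 2 by ring, exp_add]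
          ring_nf
  have hupper : ∫ u in x / 2..x, weight H u ≤ (x / 2) ^ (H - 3 / 2) * exp x :=
    calc ∫ u in x / 2..x, weight H u ≤ ∫ u in x / 2..x, (x / 2) ^ (H - 3 / 2) * exp u := by
          refine integral_mono_on (by linarith) (intervalIntegrable_weight hH₀ hx2.le hx.le)
            (continuous_exp.intervalIntegrable _ _ |>.const_mul _) fun u hu ↦ ?_
          have hu0 : 0 < u := hx2.trans_le hu.1
          exact (weight_le_rpow_mul_exp H hu0.le).trans <| mul_le_mul_of_nonneg_right
            (rpow_le_rpow_of_nonpos hx2 hu.1 (by linarith)) (exp_pos u).le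
      _ ≤ (x / 2) ^ (H - 3 / 2) * exp x := by
          rw [intervalIntegral.integral_const_mul, integral_exp]
          exact mul_le_mul_of_nonneg_left (by linarith [exp_pos (x / 2)]) (rpow_nonneg hx2.le _)
  rw [← integral_add_adjacent_intervals (intervalIntegrable_weight hH₀ le_rfl hx2.le)
    (intervalIntegrable_weight hH₀ hx2.le hx.le)]
  linarith

lemma continuousOn_integral_weight (hH : -1 / 2 < H) :
    ContinuousOn (fun x ↦ ∫ u in 0..x, weight H u) (Ioi 0) := by
  intro x (hx : 0 < x)
  have hcont := continuousOn_primitive_interval' (intervalIntegrable_weight hH le_rfl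
    (by linarith : (0:ℝ) ≤ x + 1)) left_mem_uIcc
  rw [uIcc_of_le (by linarith)] at hcont
  exact (hcont.continuousAt (Icc_mem_nhds hx (lt_add_one x))).continuousWithinAt

lemma integrableOn_exp_neg_mul_integral_weight (hH₀ : -1 / 2 < H) (hH₁ : H < 1 / 2) :
    IntegrableOn (fun x ↦ exp (-x) * ∫ u in 0..x, weight H u) (Ioi 0) := by
  have hcont : ContinuousOn (fun x ↦ exp (-x) * ∫ u in 0..x, weight H u) (Ioi 0) :=
    (continuous_exp.comp continuous_neg).continuousOn.mul (continuousOn_integral_weight hH₀)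
  have hnonneg : ∀ x ∈ Ioi (0 : ℝ), 0 ≤ exp (-x) * ∫ u in 0..x, weight H u := fun x hx ↦
    mul_nonneg (exp_pos _).le (integral_weight_nonneg H (mem_Ioi.1 hx).le)
  rw [← Ioc_union_Ioi_eq_Ioi zero_le_one]
  refine IntegrableOn.union ?_ ?_
  · have hmaj := (intervalIntegrable_rpow' (r := H + 1 / 2) (by linarith) (a := 0) (b := 1)).1
    refine Integrable.mono' (hmaj.div_const (H + 1 / 2))
      ((hcont.mono Ioc_subset_Ioi_self).aestronglyMeasurable measurableSet_Ioc) ?_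
    filter_upwards [ae_restrict_mem measurableSet_Ioc] with x hx
    rw [norm_of_nonneg (hnonneg x hx.1)]
    calc exp (-x) * ∫ u in 0..x, weight H u
        ≤ exp (-x) * (exp x * (x ^ (H + 1 / 2) / (H + 1 / 2))) :=
          mul_le_mul_of_nonneg_left (integral_weight_le_exp_mul hH₀ hx.1.le) (exp_pos _).le
      _ = x ^ (H + 1 / 2) / (H + 1 / 2) := by
          rw [← mul_assoc, ← exp_add, neg_add_cancel, exp_zero, one_mul]
  · have hmaj : IntegrableOn (fun x : ℝ ↦ (x / 2) ^ (H - 3 / 2)) (Ioi 1) := by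
      simp_rw [div_eq_mul_inv]
      exact (integrableOn_Ioi_comp_mul_right_iff (fun y ↦ y ^ (H - 3 / 2)) 1 (by norm_num)).2
        (integrableOn_Ioi_rpow_of_lt (by linarith) (by norm_num))
    refine Integrable.mono' (hmaj.const_mul (2 / (H + 1 / 2) + 1))
      ((hcont.mono (Ioi_subset_Ioi zero_le_one)).aestronglyMeasurable measurableSet_Ioi) ?_
    filter_upwards [ae_restrict_mem measurableSet_Ioi] with x (hx : 1 < x)
    rw [norm_of_nonneg (hnonneg x (zero_lt_one.trans hx))]
    calc exp (-x) * ∫ u in 0..x, weight H u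
        ≤ exp (-x) * ((2 / (H + 1 / 2) + 1) * (x / 2) ^ (H - 3 / 2) * exp x) :=
          mul_le_mul_of_nonneg_left (integral_weight_le_mul_exp hH₀ (by linarith)
            (zero_lt_one.trans hx)) (exp_pos _).le
      _ = (2 / (H + 1 / 2) + 1) * (x / 2) ^ (H - 3 / 2) := by
          rw [mul_comm, mul_assoc, ← exp_add, add_neg_cancel, exp_zero, mul_one]

end Weight

section Tail

variable {H α x K : ℝ}

lemma weight_mul_rpow_mul_exp_nonneg {v : ℝ} (hx : 0 ≤ x) (hv : x ≤ v) :
    0 ≤ weight H v * (v - x) ^ (-α - 1) * exp (-(v - x)) :=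
  mul_nonneg (mul_nonneg (weight_nonneg H (hx.trans hv)) (rpow_nonneg (sub_nonneg.2 hv) _))
    (exp_pos _).le

lemma setIntegral_weight_mul_rpow_mul_exp_nonneg (hx : 0 ≤ x) (hK : 0 < K) :
    0 ≤ ∫ v in Ioi (x + K), weight H v * (v - x) ^ (-α - 1) * exp (-(v - x)) :=
  setIntegral_nonneg measurableSet_Ioi fun v (hv : x + K < v) ↦
    weight_mul_rpow_mul_exp_nonneg hx (by linarith)

lemma weight_mul_rpow_mul_exp_le (hα : -1 ≤ α) (hx : 0 ≤ x) (hK : 0 < K) {v : ℝ}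
    (hv : x + K < v) :
    weight H v * (v - x) ^ (-α - 1) * exp (-(v - x)) ≤
      exp x * K ^ (-α - 1) * v ^ (H - 3 / 2) := by
  have hv0 : 0 ≤ v := by linarith
  calc weight H v * (v - x) ^ (-α - 1) * exp (-(v - x))
      ≤ v ^ (H - 3 / 2) * exp v * K ^ (-α - 1) * exp (-(v - x)) :=
        mul_le_mul_of_nonneg_right (mul_le_mul (weight_le_rpow_mul_exp H hv0)
          (rpow_le_rpow_of_nonpos hK (by linarith) (by linarith)) (rpow_nonneg (by linarith) _)
          (mul_nonneg (rpow_nonneg hv0 _) (exp_pos v).le)) (exp_pos _).le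
    _ = exp x * K ^ (-α - 1) * v ^ (H - 3 / 2) := by
        rw [show x = v + -(v - x) by ring, exp_add]
        ring_nf


lemma setIntegral_weight_mul_rpow_mul_exp_le (hH : H < 1 / 2) (hα : -1 ≤ α) (hx : 0 ≤ x)
    (hK : 0 < K) :
    ∫ v in Ioi (x + K), weight H v * (v - x) ^ (-α - 1) * exp (-(v - x)) ≤
      exp x * (K ^ (-α + H - 3 / 2) / (1 / 2 - H)) := by
  have hxK : 0 < x + K := by linarith
  calc ∫ v in Ioi (x + K), weight H v * (v - x) ^ (-α - 1) * exp (-(v - x))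
      ≤ ∫ v in Ioi (x + K), exp x * K ^ (-α - 1) * v ^ (H - 3 / 2) := by
        refine integral_mono_of_nonneg ?_
          ((integrableOn_Ioi_rpow_of_lt (by linarith) hxK).const_mul _) ?_
        · filter_upwards [ae_restrict_mem measurableSet_Ioi] with v (hv : x + K < v)
          exact weight_mul_rpow_mul_exp_nonneg hx (by linarith)
        · filter_upwards [ae_restrict_mem measurableSet_Ioi] with v hv
          exact weight_mul_rpow_mul_exp_le hα hx hK hv
    _ = exp x * K ^ (-α - 1) * ((x + K) ^ (H - 1 / 2) / (1 / 2 - H)) := by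
        rw [MeasureTheory.integral_const_mul, integral_Ioi_rpow_of_lt (by linarith) hxK,
          show H - 3 / 2 + 1 = H - 1 / 2 by ring, ← neg_div_neg_eq, neg_neg, neg_sub]
    _ ≤ exp x * K ^ (-α - 1) * (K ^ (H - 1 / 2) / (1 / 2 - H)) := by
        have hKH : (x + K) ^ (H - 1 / 2) ≤ K ^ (H - 1 / 2) :=
          rpow_le_rpow_of_nonpos hK (by linarith) (by linarith)
        gcongr
    _ = exp x * (K ^ (-α + H - 3 / 2) / (1 / 2 - H)) := by
        rw [show -α + H - 3 / 2 = (-α - 1) + (H - 1 / 2) by ring, rpow_add hK]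
        ring

end Tail

theorem stmt_15_general (H α : ℝ) (hH0 : 0 < H) (hH1 : H < 1 / 2) (hα0 : 0 < α) :
    ∃ c : ℝ, ∀ K : ℝ, 1 ≤ K →
      (∫ x in Set.Ioi (0 : ℝ), Real.exp (-2 * x) *
          (∫ u in (0:ℝ)..x, u ^ (H - 3 / 2) * (Real.exp u - 1)) *
          (∫ v in Set.Ioi (x + K),
            v ^ (H - 3 / 2) * (Real.exp v - 1) * (v - x) ^ (-α - 1) * Real.exp (-(v - x)))) ≤
        c * K ^ (-α + H - 3 / 2) := by
  refine ⟨(1 / 2 - H)⁻¹ * ∫ x in Ioi 0, exp (-x) * ∫ u in 0..x, weight H u,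
    fun K hK ↦ ?_⟩
  have hK0 : 0 < K := by linarith
  calc (∫ x in Ioi 0, exp (-2 * x) * (∫ u in 0..x, weight H u) *
          ∫ v in Ioi (x + K), weight H v * (v - x) ^ (-α - 1) * exp (-(v - x)))
      ≤ ∫ x in Ioi 0,
          K ^ (-α + H - 3 / 2) / (1 / 2 - H) * (exp (-x) * ∫ u in 0..x, weight H u) := by
        refine integral_mono_of_nonneg ?_
          ((integrableOn_exp_neg_mul_integral_weight (by linarith) hH1).const_mul _) ?_
        all_goals filter_upwards [ae_restrict_mem measurableSet_Ioi] with x (hx : 0 < x)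
        · exact mul_nonneg (mul_nonneg (exp_pos _).le (integral_weight_nonneg H hx.le))
            (setIntegral_weight_mul_rpow_mul_exp_nonneg hx.le hK0)
        · calc exp (-2 * x) * (∫ u in 0..x, weight H u) *
                ∫ v in Ioi (x + K), weight H v * (v - x) ^ (-α - 1) * exp (-(v - x))
              ≤ exp (-2 * x) * (∫ u in 0..x, weight H u) *
                  (exp x * (K ^ (-α + H - 3 / 2) / (1 / 2 - H))) :=
                mul_le_mul_of_nonneg_left
                  (setIntegral_weight_mul_rpow_mul_exp_le hH1 (by linarith) hx.le hK0)
                  (mul_nonneg (exp_pos _).le (integral_weight_nonneg H hx.le))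
            _ = _ := by
                rw [show -2 * x = -x + -x by ring, exp_add, exp_neg]
                field_simp
    _ = _ := by rw [MeasureTheory.integral_const_mul]; ring

/-- estimate of the term `J_{4,3,3}`. -/
theorem stmt_15 (H α : ℝ) (hH0 : 0 < H) (hH1 : H < 1 / 2) (hα0 : 0 < α) (hα1 : α ≤ 1) :
    ∃ c : ℝ, ∀ K : ℝ, 1 ≤ K →
      (∫ x in Set.Ioi (0 : ℝ), Real.exp (-2 * x) *
          (∫ u in (0:ℝ)..x, u ^ (H - 3 / 2) * (Real.exp u - 1)) *
          (∫ v in Set.Ioi (x + K),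
            v ^ (H - 3 / 2) * (Real.exp v - 1) * (v - x) ^ (-α - 1) * Real.exp (-(v - x)))) ≤
        c * K ^ (-α + H - 3 / 2) :=
  stmt_15_general H α hH0 hH1 hα0
end

section
/- Let α ∈ (0,1]. Then there exists a finite constant c_α such that for all δ ∈ (0,1] and all K ≥ 1: δ · ∑_{n ≥ 1, n²δ > K} n^{1−2α} e^{−n²δ} ≤ c_α · δ^{α} · K^{−(α+1)}. -/
open Real Finset

/-!
For `n²δ > K` we have `n^{1-2α} = n (n²)^{-α} ≤ n (K/δ)^{-α}`, and half of the
Gaussian factor gives `e^{-n²δ/2} ≤ e^{-K/2} ≤ 2/K`. What remains is `∑ n e^{-n²δ/2}`, a Riemann sum of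
`∫ x e^{-x²δ/2} dx = 1/(δ/2)`, which telescopes against the values `e^{-n²δ/2}` themselves.
-/

lemma add_one_mul_exp_neg_sq_le_sub {x c : ℝ} (hx : 0 ≤ x) (hc : 0 ≤ c) :
    (x + 1) * c * exp (-(x + 1) ^ 2 * c) ≤ exp (-x ^ 2 * c) - exp (-(x + 1) ^ 2 * c) := by
  have hsplit : exp (-x ^ 2 * c) = exp (-(x + 1) ^ 2 * c) * exp ((2 * x + 1) * c) := by
    rw [← exp_add]; ring_nf
  have hlin : (x + 1) * c + 1 ≤ exp ((2 * x + 1) * c) :=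
    le_trans (by nlinarith) (add_one_le_exp _)
  rw [hsplit]
  nlinarith [exp_pos (-(x + 1) ^ 2 * c)]

lemma sum_range_mul_exp_neg_sq_le {c : ℝ} (hc : 0 < c) (N : ℕ) :
    ∑ n ∈ range N, (n : ℝ) * exp (-(n : ℝ) ^ 2 * c) ≤ 1 / c := by
  rw [le_div_iff₀ hc, sum_mul]
  cases N with
  | zero => simp
  | succ N =>
    rw [sum_range_succ']
    simp only [Nat.cast_zero, zero_mul, add_zero, Nat.cast_succ]
    calc ∑ n ∈ range N, ((n : ℝ) + 1) * exp (-((n : ℝ) + 1) ^ 2 * c) * c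
        ≤ ∑ n ∈ range N, (exp (-(n : ℝ) ^ 2 * c) - exp (-((n : ℝ) + 1) ^ 2 * c)) := by
          gcongr with n
          linarith [add_one_mul_exp_neg_sq_le_sub (Nat.cast_nonneg n) hc.le]
      _ = 1 - exp (-(N : ℝ) ^ 2 * c) := by
          have h := sum_range_sub' (fun n : ℕ => exp (-(n : ℝ) ^ 2 * c)) N
          push_cast at h
          rw [h]
          norm_num
      _ ≤ 1 := by linarith [exp_pos (-(N : ℝ) ^ 2 * c)]

lemma exp_neg_half_le_two_div {K : ℝ} (hK : 0 < K) : exp (-(K / 2)) ≤ 2 / K := by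
  rw [exp_neg, inv_eq_one_div, div_le_div_iff₀ (exp_pos _) hK]
  linarith [add_one_le_exp (K / 2)]

lemma rpow_one_sub_two_mul_eq {x : ℝ} (hx : 0 < x) (α : ℝ) :
    x ^ (1 - 2 * α) = x * (x ^ 2) ^ (-α) := by
  rw [← rpow_natCast, ← rpow_mul hx.le, sub_eq_add_neg, rpow_add hx, rpow_one]
  norm_num

lemma rpow_one_sub_two_mul_mul_exp_le {α δ K x : ℝ} (hα : 0 ≤ α) (hδ : 0 < δ) (hK : 0 < K)
    (hx : 0 ≤ x) (hKx : K < x ^ 2 * δ) :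
    x ^ (1 - 2 * α) * exp (-x ^ 2 * δ) ≤
      2 * (δ ^ α * K ^ (-(α + 1))) * (x * exp (-x ^ 2 * (δ / 2))) := by
  have hx0 : 0 < x := hx.lt_of_ne (by rintro rfl; linarith)
  have hpow : x ^ (1 - 2 * α) ≤ x * (δ ^ α * K ^ (-α)) := by
    have hKx' : K / δ ≤ x ^ 2 := by rw [div_le_iff₀ hδ]; exact hKx.le
    calc x ^ (1 - 2 * α) = x * (x ^ 2) ^ (-α) := rpow_one_sub_two_mul_eq hx0 α
      _ ≤ x * (K / δ) ^ (-α) :=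
          mul_le_mul_of_nonneg_left
            (rpow_le_rpow_of_nonpos (by positivity) hKx' (neg_nonpos.mpr hα)) hx
      _ = x * (δ ^ α * K ^ (-α)) := by
          rw [div_rpow hK.le hδ.le, rpow_neg hδ.le, div_inv_eq_mul, mul_comm (K ^ _)]
  have hexp : exp (-x ^ 2 * δ) ≤ 2 / K * exp (-x ^ 2 * (δ / 2)) := by
    calc exp (-x ^ 2 * δ) = exp (-x ^ 2 * (δ / 2)) * exp (-x ^ 2 * (δ / 2)) := by
          rw [← exp_add]; ring_nf
      _ ≤ exp (-(K / 2)) * exp (-x ^ 2 * (δ / 2)) := by gcongr; linarith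
      _ ≤ 2 / K * exp (-x ^ 2 * (δ / 2)) := by gcongr; exact exp_neg_half_le_two_div hK
  have hKpow : K ^ (-(α + 1)) = K ^ (-α) / K := by
    rw [neg_add, rpow_add hK, rpow_neg_one, div_eq_mul_inv]
  calc x ^ (1 - 2 * α) * exp (-x ^ 2 * δ)
      ≤ x * (δ ^ α * K ^ (-α)) * (2 / K * exp (-x ^ 2 * (δ / 2))) := by gcongr
    _ = 2 * (δ ^ α * K ^ (-(α + 1))) * (x * exp (-x ^ 2 * (δ / 2))) := by
        rw [hKpow]; ring

theorem stmt_16_general (α : ℝ) (hα0 : 0 < α) :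
    ∃ cα : ℝ, ∀ δ : ℝ, 0 < δ → δ ≤ 1 → ∀ K : ℝ, 1 ≤ K →
      δ * (∑' n : ℕ, if K < (n : ℝ) ^ 2 * δ then
          (n : ℝ) ^ (1 - 2 * α) * Real.exp (-(n : ℝ) ^ 2 * δ) else 0) ≤
        cα * δ ^ α * K ^ (-(α + 1)) := by
  refine ⟨4, fun δ hδ _ K hK => ?_⟩
  have hK0 : 0 < K := one_pos.trans_le hK
  set A := δ ^ α * K ^ (-(α + 1))
  set f : ℕ → ℝ := fun n => if K < (n : ℝ) ^ 2 * δ then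
    (n : ℝ) ^ (1 - 2 * α) * exp (-(n : ℝ) ^ 2 * δ) else 0
  have hf : ∀ n, f n ≤ 2 * A * ((n : ℝ) * exp (-(n : ℝ) ^ 2 * (δ / 2))) := fun n => by
    by_cases hn : K < (n : ℝ) ^ 2 * δ
    · simpa only [f, if_pos hn] using
        rpow_one_sub_two_mul_mul_exp_le hα0.le hδ hK0 (Nat.cast_nonneg n) hn
    · simp only [f, if_neg hn]; positivity
  have hf0 : ∀ n, 0 ≤ f n := fun n => by simp only [f]; split_ifs <;> positivity
  have hpartial : ∀ N, ∑ n ∈ range N, f n ≤ 2 * A * (1 / (δ / 2)) := fun N =>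
    calc ∑ n ∈ range N, f n
        ≤ 2 * A * ∑ n ∈ range N, (n : ℝ) * exp (-(n : ℝ) ^ 2 * (δ / 2)) := by
          rw [mul_sum]; exact sum_le_sum fun n _ => hf n
      _ ≤ 2 * A * (1 / (δ / 2)) := by
          gcongr; exact sum_range_mul_exp_neg_sq_le (by positivity) N
  calc δ * ∑' n, f n ≤ δ * (2 * A * (1 / (δ / 2))) := by
        gcongr; exact tsum_le_of_sum_range_le hf0 hpartial
    _ = 4 * δ ^ α * K ^ (-(α + 1)) := by field_simp; ring

/-- the bound on `∑_{n ∈ S_K} q_n |I_{4,4}|`. -/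
theorem stmt_16 (α : ℝ) (hα0 : 0 < α) (hα1 : α ≤ 1) :
    ∃ cα : ℝ, ∀ δ : ℝ, 0 < δ → δ ≤ 1 → ∀ K : ℝ, 1 ≤ K →
      δ * (∑' n : ℕ, if K < (n : ℝ) ^ 2 * δ then
          (n : ℝ) ^ (1 - 2 * α) * Real.exp (-(n : ℝ) ^ 2 * δ) else 0) ≤
        cα * δ ^ α * K ^ (-(α + 1)) :=
  stmt_16_general α hα0
end

section
/- Let H ∈ (0, 1/2). Then there exists a finite constant c_H such that for every integer n ≥ 1, every real δ > 0 with n²δ ≥ 1, and every s > 0: ∫₀^s r^{H−1/2} (r^{H−1/2} − (r+δ)^{H−1/2}) e^{−2n²r} dr ≤ c_H · n^{−4H} · (1 + n²δ). -/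
/-!
Since `(r + δ) ^ (H - 1/2) ≥ 0`, the integrand is at most `r ^ (2H - 1) e^{-2n²r}`, whose integral
over the whole half-line is `Γ(2H) (2n²)^{-2H}`; the factor `1 + n²δ ≥ 1` is then free.
-/

open Real MeasureTheory intervalIntegral Set

theorem rpow_mul_rpow_sub_rpow_add_le {x δ p : ℝ} (hx : 0 < x) (hδ : 0 ≤ δ) :
    x ^ p * (x ^ p - (x + δ) ^ p) ≤ x ^ (2 * p) := by
  have hxδ : 0 ≤ (x + δ) ^ p := rpow_nonneg (by linarith) p
  calc x ^ p * (x ^ p - (x + δ) ^ p) ≤ x ^ p * x ^ p := by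
        gcongr
        linarith
    _ = x ^ (2 * p) := by rw [← rpow_add hx, two_mul]

theorem integrableOn_rpow_mul_exp_neg_mul_Ioi {a r : ℝ} (ha : 0 < a) (hr : 0 < r) :
    IntegrableOn (fun t : ℝ ↦ t ^ (a - 1) * exp (-(r * t))) (Ioi 0) := by
  simpa only [rpow_one, neg_mul] using
    integrableOn_rpow_mul_exp_neg_mul_rpow (by linarith : -1 < a - 1) zero_lt_one hr

theorem intervalIntegral_le_setIntegral_Ioi_of_le {f g : ℝ → ℝ} {a s : ℝ} (has : a ≤ s)
    (hg : IntegrableOn g (Ioi a)) (hg0 : ∀ x ∈ Ioi a, 0 ≤ g x)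
    (hfg : ∀ x ∈ Ioc a s, f x ≤ g x) :
    ∫ x in a..s, f x ≤ ∫ x in Ioi a, g x := by
  rw [integral_of_le has]
  have hmono : ∫ x in Ioc a s, g x ≤ ∫ x in Ioi a, g x :=
    setIntegral_mono_set hg (ae_restrict_of_forall_mem measurableSet_Ioi hg0)
      Ioc_subset_Ioi_self.eventuallyLE
  by_cases hf : IntegrableOn f (Ioc a s)
  · exact (setIntegral_mono_on hf (hg.mono_set Ioc_subset_Ioi_self) measurableSet_Ioc hfg).trans
      hmono
  · rw [integral_undef hf]
    exact setIntegral_nonneg measurableSet_Ioi hg0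

theorem one_div_two_mul_sq_rpow {x : ℝ} (hx : 0 < x) (q : ℝ) :
    (1 / (2 * x ^ 2)) ^ q = (1 / 2) ^ q * x ^ (-2 * q) := by
  rw [← one_div_mul_one_div, mul_rpow (by positivity) (by positivity), one_div (x ^ 2),
    ← rpow_two, ← rpow_neg hx.le, ← rpow_mul hx.le]

theorem stmt_17_general (H : ℝ) (hH0 : 0 < H) :
    ∃ c : ℝ, ∀ n : ℕ, 1 ≤ n → ∀ δ : ℝ, 0 < δ → 1 ≤ (n : ℝ) ^ 2 * δ → ∀ s : ℝ, 0 < s →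
      (∫ r in (0:ℝ)..s,
          r ^ (H - 1 / 2) * (r ^ (H - 1 / 2) - (r + δ) ^ (H - 1 / 2)) *
            Real.exp (-2 * (n : ℝ) ^ 2 * r)) ≤
        c * (n : ℝ) ^ (-4 * H) * (1 + (n : ℝ) ^ 2 * δ) := by
  refine ⟨Gamma (2 * H) * (1 / 2) ^ (2 * H), fun n hn δ hδ _ s hs => ?_⟩
  have hn0 : (0 : ℝ) < n := by exact_mod_cast hn
  have h2H : 0 < 2 * H := by linarith
  have hb : (0 : ℝ) < 2 * n ^ 2 := by positivity
  have hc : 0 ≤ Gamma (2 * H) * (1 / 2) ^ (2 * H) * (n : ℝ) ^ (-4 * H) := by positivity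
  calc _ ≤ ∫ r in Ioi 0, r ^ (2 * H - 1) * exp (-(2 * n ^ 2 * r)) :=
        intervalIntegral_le_setIntegral_Ioi_of_le hs.le
          (integrableOn_rpow_mul_exp_neg_mul_Ioi h2H hb) (fun r (hr : 0 < r) => by positivity)
          fun r hr => by
            rw [show 2 * H - 1 = 2 * (H - 1 / 2) by ring, neg_mul_eq_neg_mul, ← neg_mul]
            exact mul_le_mul_of_nonneg_right (rpow_mul_rpow_sub_rpow_add_le hr.1 hδ.le)
              (exp_pos _).le
    _ = Gamma (2 * H) * (1 / 2) ^ (2 * H) * (n : ℝ) ^ (-4 * H) := by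
        rw [integral_rpow_mul_exp_neg_mul_Ioi h2H hb, one_div_two_mul_sq_rpow hn0]
        ring_nf
    _ ≤ _ := le_mul_of_one_le_right hc (by linarith [mul_pos (pow_pos hn0 2) hδ])

/-- the bound on `|I_{4,1}|`-type integrals. -/
theorem stmt_17 (H : ℝ) (hH0 : 0 < H) (hH1 : H < 1 / 2) :
    ∃ c : ℝ, ∀ n : ℕ, 1 ≤ n → ∀ δ : ℝ, 0 < δ → 1 ≤ (n : ℝ) ^ 2 * δ → ∀ s : ℝ, 0 < s →
      (∫ r in (0:ℝ)..s,
          r ^ (H - 1 / 2) * (r ^ (H - 1 / 2) - (r + δ) ^ (H - 1 / 2)) *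
            Real.exp (-2 * (n : ℝ) ^ 2 * r)) ≤
        c * (n : ℝ) ^ (-4 * H) * (1 + (n : ℝ) ^ 2 * δ) :=
  stmt_17_general H hH0
end

section
/- Let H ∈ (0, 1/2) and t₀ > 0. Then the integral ∫₀^{t₀} e^{−2x} (x^{H−1/2} − (1/2 − H) ∫₀^x u^{H−3/2} (e^u − 1) du)² dx is finite and strictly positive. -/
open Real MeasureTheory intervalIntegral

open Set
section aux
variable {H t₀ : ℝ}

/-- pointwise bounds for the inner integrand -/
lemma inner_bnd (hH0 : 0 < H) (hu : 0 ≤ u) (hut : u ≤ t₀) :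
    0 ≤ u ^ (H - 3 / 2) * (Real.exp u - 1) ∧
      u ^ (H - 3 / 2) * (Real.exp u - 1) ≤ Real.exp t₀ * u ^ (H - 1 / 2) := by
  rcases eq_or_lt_of_le hu with h | h
  · subst h
    simp only [Real.exp_zero, sub_self, mul_zero, le_refl, true_and]
    positivity
  · have hne : u ≠ 0 := ne_of_gt h
    have h1 : 0 ≤ u ^ (H - 3 / 2) := (Real.rpow_pos_of_pos h _).le
    have h2 : 0 ≤ Real.exp u - 1 := by
      have := Real.add_one_le_exp u; linarith
    constructor
    · exact mul_nonneg h1 h2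
    · have h3 : Real.exp u - 1 ≤ u * Real.exp u := by
        have h4 : -u + 1 ≤ Real.exp (-u) := Real.add_one_le_exp _
        rw [Real.exp_neg] at h4
        have h5 : (0:ℝ) < Real.exp u := Real.exp_pos u
        have h6 := mul_le_mul_of_nonneg_right h4 h5.le
        rw [inv_mul_cancel₀ (ne_of_gt h5)] at h6
        nlinarith
      have h7 : u * Real.exp u ≤ u * Real.exp t₀ :=
        mul_le_mul_of_nonneg_left (Real.exp_le_exp.mpr hut) hu
      calc u ^ (H - 3 / 2) * (Real.exp u - 1) ≤ u ^ (H - 3 / 2) * (u * Real.exp t₀) :=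
            mul_le_mul_of_nonneg_left (h3.trans h7) h1
        _ = Real.exp t₀ * u ^ (H - 1 / 2) := by
            rw [show H - 1 / 2 = (H - 3 / 2) + 1 by ring, Real.rpow_add_one hne]; ring

lemma inner_intble (hH0 : 0 < H) (ht₀ : 0 ≤ t₀) :
    IntervalIntegrable (fun u : ℝ => u ^ (H - 3 / 2) * (Real.exp u - 1)) volume 0 t₀ := by
  rw [intervalIntegrable_iff_integrableOn_Ioc_of_le ht₀]
  have hmaj : IntegrableOn (fun u : ℝ => Real.exp t₀ * u ^ (H - 1 / 2)) (Ioc 0 t₀) volume := by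
    rw [← intervalIntegrable_iff_integrableOn_Ioc_of_le ht₀]
    exact (intervalIntegrable_rpow' (by linarith)).const_mul _
  apply hmaj.integrable.mono'
  · apply ContinuousOn.aestronglyMeasurable _ measurableSet_Ioc
    intro u hu
    exact (((Real.continuousAt_rpow_const u _ (Or.inl (ne_of_gt hu.1))).mul
      (by fun_prop)).continuousWithinAt)
  · filter_upwards [ae_restrict_mem measurableSet_Ioc] with u hu
    obtain ⟨hl, hr⟩ := inner_bnd hH0 hu.1.le hu.2
    rw [Real.norm_eq_abs, abs_of_nonneg hl]; exact hr

end aux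

section aux2
variable {H t₀ : ℝ}

lemma g_bnd (hH0 : 0 < H) (hx : 0 ≤ x) (hxt : x ≤ t₀) :
    0 ≤ (∫ u in (0:ℝ)..x, u ^ (H - 3 / 2) * (Real.exp u - 1)) ∧
      (∫ u in (0:ℝ)..x, u ^ (H - 3 / 2) * (Real.exp u - 1)) ≤
        Real.exp t₀ * x ^ (H + 1 / 2) / (H + 1 / 2) := by
  have ht₀ : 0 ≤ t₀ := hx.trans hxt
  have hint : IntervalIntegrable (fun u : ℝ => u ^ (H - 3 / 2) * (Real.exp u - 1)) volume 0 x :=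
    (inner_intble hH0 ht₀).mono_set (by
      rw [uIcc_of_le hx, uIcc_of_le ht₀]; exact Icc_subset_Icc le_rfl hxt)
  constructor
  · apply intervalIntegral.integral_nonneg hx
    intro u hu
    exact (inner_bnd hH0 hu.1 (hu.2.trans hxt)).1
  · have hmono : (∫ u in (0:ℝ)..x, u ^ (H - 3 / 2) * (Real.exp u - 1)) ≤
        ∫ u in (0:ℝ)..x, Real.exp t₀ * u ^ (H - 1 / 2) := by
      apply intervalIntegral.integral_mono_on hx hint
        ((intervalIntegrable_rpow' (by linarith)).const_mul _)
      intro u hu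
      exact (inner_bnd hH0 hu.1 (hu.2.trans hxt)).2
    refine hmono.trans ?_
    rw [intervalIntegral.integral_const_mul, integral_rpow (Or.inl (by linarith))]
    rw [show H - 1 / 2 + 1 = H + 1 / 2 by ring,
      Real.zero_rpow (by positivity : H + 1 / 2 ≠ 0)]
    rw [mul_div_assoc]
    ring_nf
    exact le_rfl

end aux2

/-- the integral in (16) is finite and strictly positive. -/
theorem stmt_18 (H t₀ : ℝ) (hH0 : 0 < H) (hH1 : H < 1 / 2) (ht₀ : 0 < t₀) :
    IntervalIntegrable
      (fun x : ℝ => Real.exp (-2 * x) *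
        (x ^ (H - 1 / 2) -
          (1 / 2 - H) * ∫ u in (0:ℝ)..x, u ^ (H - 3 / 2) * (Real.exp u - 1)) ^ 2)
      MeasureTheory.volume 0 t₀ ∧
    0 < ∫ x in (0:ℝ)..t₀, Real.exp (-2 * x) *
        (x ^ (H - 1 / 2) -
          (1 / 2 - H) * ∫ u in (0:ℝ)..x, u ^ (H - 3 / 2) * (Real.exp u - 1)) ^ 2 := by
  set c : ℝ := 1 / 2 - H with hc_def
  have hc : 0 < c := by simp [hc_def]; linarith
  set g : ℝ → ℝ := fun x => ∫ u in (0:ℝ)..x, u ^ (H - 3 / 2) * (Real.exp u - 1) with hg_def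
  set f : ℝ → ℝ := fun x => Real.exp (-2 * x) * (x ^ (H - 1 / 2) - c * g x) ^ 2 with hf_def
  -- f is nonnegative everywhere
  have hf_nonneg : ∀ x, 0 ≤ f x := fun x =>
    mul_nonneg (Real.exp_pos _).le (sq_nonneg _)
  -- continuity of g on Icc 0 t₀
  have hg_cont : ContinuousOn g (Icc 0 t₀) := by
    have h0 : IntegrableOn (fun u : ℝ => u ^ (H - 3 / 2) * (Real.exp u - 1))
        (uIcc (0:ℝ) t₀) volume := by
      rw [uIcc_of_le ht₀.le, integrableOn_Icc_iff_integrableOn_Ioc]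
      exact (intervalIntegrable_iff_integrableOn_Ioc_of_le ht₀.le).mp (inner_intble hH0 ht₀.le)
    have := intervalIntegral.continuousOn_primitive_interval h0
    rwa [uIcc_of_le ht₀.le] at this
  -- continuity of f on Ioc 0 t₀
  have hf_cont : ContinuousOn f (Ioc 0 t₀) := by
    apply ContinuousOn.mul (Continuous.continuousOn (by fun_prop))
    apply ContinuousOn.pow
    apply ContinuousOn.sub
    · intro x hx
      exact (Real.continuousAt_rpow_const x _ (Or.inl (ne_of_gt hx.1))).continuousWithinAt
    · exact continuousOn_const.mul (hg_cont.mono Ioc_subset_Icc_self)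
  -- the bound D
  set D : ℝ := c * (Real.exp t₀ * t₀ ^ (H + 1 / 2) / (H + 1 / 2)) with hD_def
  have hD : 0 ≤ D := by positivity
  have hcg : ∀ x ∈ Ioc (0:ℝ) t₀, 0 ≤ c * g x ∧ c * g x ≤ D := by
    intro x hx
    obtain ⟨h1, h2⟩ := g_bnd (t₀ := t₀) hH0 hx.1.le hx.2
    refine ⟨mul_nonneg hc.le h1, ?_⟩
    have h3 : x ^ (H + 1 / 2) ≤ t₀ ^ (H + 1 / 2) :=
      Real.rpow_le_rpow hx.1.le hx.2 (by linarith)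
    have h4 : Real.exp t₀ * x ^ (H + 1 / 2) / (H + 1 / 2) ≤
        Real.exp t₀ * t₀ ^ (H + 1 / 2) / (H + 1 / 2) := by
      gcongr
    exact (mul_le_mul_of_nonneg_left (h2.trans h4) hc.le)
  -- integrability
  have hf_int : IntervalIntegrable f volume 0 t₀ := by
    rw [intervalIntegrable_iff_integrableOn_Ioc_of_le ht₀.le]
    have hB : IntegrableOn
        (fun x : ℝ => x ^ (2 * H - 1) + (2 * D * x ^ (H - 1 / 2) + D ^ 2)) (Ioc 0 t₀) volume := by
      rw [← intervalIntegrable_iff_integrableOn_Ioc_of_le ht₀.le]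
      exact (intervalIntegrable_rpow' (by linarith)).add
        (((intervalIntegrable_rpow' (by linarith)).const_mul _).add intervalIntegrable_const)
    apply hB.integrable.mono' (hf_cont.aestronglyMeasurable measurableSet_Ioc)
    filter_upwards [ae_restrict_mem measurableSet_Ioc] with x hx
    obtain ⟨h1, h2⟩ := hcg x hx
    have hxp : (0:ℝ) < x := hx.1
    have hrp : 0 ≤ x ^ (H - 1 / 2) := (Real.rpow_pos_of_pos hxp _).le
    have hexp : Real.exp (-2 * x) ≤ 1 := by
      rw [Real.exp_le_one_iff]; linarith
    have hsq : x ^ (2 * H - 1) = x ^ (H - 1 / 2) * x ^ (H - 1 / 2) := by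
      rw [← Real.rpow_add hxp]; ring_nf
    rw [Real.norm_eq_abs, abs_of_nonneg (hf_nonneg x)]
    have hΦ : (x ^ (H - 1 / 2) - c * g x) ^ 2 ≤ (x ^ (H - 1 / 2) + D) ^ 2 := by
      clear_value c g f D
      apply sq_le_sq' <;> linarith
    calc f x ≤ 1 * (x ^ (H - 1 / 2) - c * g x) ^ 2 :=
          mul_le_mul_of_nonneg_right hexp (sq_nonneg _)
      _ = (x ^ (H - 1 / 2) - c * g x) ^ 2 := one_mul _
      _ ≤ (x ^ (H - 1 / 2) + D) ^ 2 := hΦ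
      _ = x ^ (2 * H - 1) + (2 * D * x ^ (H - 1 / 2) + D ^ 2) := by rw [hsq]; ring
  refine ⟨hf_int, ?_⟩
  -- positivity
  set K : ℝ := c * Real.exp t₀ / (H + 1 / 2) with hK_def
  have hK : 0 < K := by positivity
  set ε : ℝ := min t₀ (1 / (2 * K)) with hε_def
  have hε : 0 < ε := lt_min ht₀ (by positivity)
  have hεt : ε ≤ t₀ := min_le_left _ _
  have hpos : ∀ x ∈ Ioo (0:ℝ) ε, 0 < f x := by
    intro x hx
    have hx0 : 0 < x := hx.1
    have hxt : x ≤ t₀ := hx.2.le.trans hεt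
    have hxK : x < 1 / (2 * K) := hx.2.trans_le (min_le_right _ _)
    obtain ⟨h1, h2⟩ := g_bnd (t₀ := t₀) hH0 hx0.le hxt
    have h3 : c * g x ≤ K * x ^ (H + 1 / 2) := by
      rw [hK_def]
      calc c * g x ≤ c * (Real.exp t₀ * x ^ (H + 1 / 2) / (H + 1 / 2)) :=
            mul_le_mul_of_nonneg_left h2 hc.le
        _ = c * Real.exp t₀ / (H + 1 / 2) * x ^ (H + 1 / 2) := by ring
    have h4 : x ^ (H + 1 / 2) = x ^ (H - 1 / 2) * x := by
      rw [show H + 1 / 2 = (H - 1 / 2) + 1 by ring, Real.rpow_add_one (ne_of_gt hx0)]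
    have h5 : 0 < x ^ (H - 1 / 2) := Real.rpow_pos_of_pos hx0 _
    have h6 : K * x < 1 := by
      have h7 : x * (2 * K) < 1 := (lt_div_iff₀ (by positivity)).mp hxK
      nlinarith [hK.le, hx0.le]
    have hΦ : 0 < x ^ (H - 1 / 2) - c * g x := by
      have : K * x ^ (H + 1 / 2) < x ^ (H - 1 / 2) := by
        rw [h4]
        calc K * (x ^ (H - 1 / 2) * x) = (K * x) * x ^ (H - 1 / 2) := by ring
          _ < 1 * x ^ (H - 1 / 2) := mul_lt_mul_of_pos_right h6 h5
          _ = x ^ (H - 1 / 2) := one_mul _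
      linarith
    exact mul_pos (Real.exp_pos _) (pow_pos hΦ 2)
  have hi1 : IntervalIntegrable f volume 0 ε := hf_int.mono_set
    (by rw [uIcc_of_le hε.le, uIcc_of_le ht₀.le]; exact Icc_subset_Icc le_rfl hεt)
  have hi2 : IntervalIntegrable f volume ε t₀ := hf_int.mono_set
    (by rw [uIcc_of_le hεt, uIcc_of_le ht₀.le]; exact Icc_subset_Icc hε.le le_rfl)
  have hsplit : (∫ x in (0:ℝ)..ε, f x) + ∫ x in ε..t₀, f x = ∫ x in (0:ℝ)..t₀, f x :=
    intervalIntegral.integral_add_adjacent_intervals hi1 hi2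
  have hp1 : 0 < ∫ x in (0:ℝ)..ε, f x :=
    intervalIntegral.intervalIntegral_pos_of_pos_on hi1 hpos hε
  have hp2 : 0 ≤ ∫ x in ε..t₀, f x :=
    intervalIntegral.integral_nonneg hεt (fun x _ => hf_nonneg x)
  linarith
end
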